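/- arXiv:2212.05540 — 7 statements merged into one kernel-verified Lean document; each statement's English description precedes it below -/
import Mathlib

section
/- Let t ≥ 2 and q ≥ 1 be integers and let G = K_1 ∨ (q·K_t), a graph on qt+1 vertices. Then λ_max(A(G)) = (t−1)/2 + √(qt + (t−1)²/4), λ_min(A(G)) = (t−1)/2 − √(qt + (t−1)²/4), and consequently S(G) = √(4qt + (t−1)²). -/
open Finset SimpleGraph Matrix

attribute [local instance] Classical.propDecidable

/-- `H` is a minor of `G`: there is a family of nonempty, pairwise disjoint, connected
branch sets in `G`, one for each vertex of `H`, such that adjacent vertices of `H`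
have an edge of `G` between their branch sets. -/
def SimpleGraph.IsMinorOf {W V : Type*} (H : SimpleGraph W) (G : SimpleGraph V) : Prop :=
  ∃ φ : W → Set V,
    (∀ w, (φ w).Nonempty) ∧
    (∀ w, (G.induce (φ w)).Connected) ∧
    (Pairwise fun w₁ w₂ => Disjoint (φ w₁) (φ w₂)) ∧
    ∀ ⦃w₁ w₂⦄, H.Adj w₁ w₂ → ∃ v₁ ∈ φ w₁, ∃ v₂ ∈ φ w₂, G.Adj v₁ v₂

/-- `G` has no `K_{2,t}` minor. -/
def K2tMinorFree (t : ℕ) {V : Type*} (G : SimpleGraph V) : Prop :=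
  ¬ (completeBipartiteGraph (Fin 2) (Fin t)).IsMinorOf G

/-- The real adjacency matrix of a graph. -/
noncomputable def adjMat {V : Type*} [Fintype V] (G : SimpleGraph V) : Matrix V V ℝ :=
  fun u v => if G.Adj u v then 1 else 0

/-- The largest adjacency eigenvalue. -/
noncomputable def lamMax {V : Type*} [Fintype V] (G : SimpleGraph V) : ℝ :=
  sSup {μ : ℝ | ∃ z : V → ℝ, z ≠ 0 ∧ adjMat G *ᵥ z = μ • z}

/-- The smallest adjacency eigenvalue. -/
noncomputable def lamMin {V : Type*} [Fintype V] (G : SimpleGraph V) : ℝ :=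
  sInf {μ : ℝ | ∃ z : V → ℝ, z ≠ 0 ∧ adjMat G *ᵥ z = μ • z}

/-- The spread of a graph: difference of extreme adjacency eigenvalues. -/
noncomputable def spread {V : Type*} [Fintype V] (G : SimpleGraph V) : ℝ :=
  lamMax G - lamMin G

/-- The join `G ∨ H` of two graphs. -/
def gJoin {α β : Type*} (G : SimpleGraph α) (H : SimpleGraph β) : SimpleGraph (α ⊕ β) where
  Adj x y :=
    match x, y with
    | Sum.inl a, Sum.inl a' => G.Adj a a'
    | Sum.inl _, Sum.inr _ => True
    | Sum.inr _, Sum.inl _ => True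
    | Sum.inr b, Sum.inr b' => H.Adj b b'
  symm := ⟨by rintro (a | b) (a' | b') h <;> simp_all <;> exact h.symm⟩
  loopless := ⟨by rintro (a | b) h <;> simp_all⟩

/-- The disjoint union of two graphs. -/
def gSum {α β : Type*} (G : SimpleGraph α) (H : SimpleGraph β) : SimpleGraph (α ⊕ β) where
  Adj x y :=
    match x, y with
    | Sum.inl a, Sum.inl a' => G.Adj a a'
    | Sum.inr b, Sum.inr b' => H.Adj b b'
    | _, _ => False
  symm := ⟨by rintro (a | b) (a' | b') h <;> simp_all <;> exact h.symm⟩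
  loopless := ⟨by rintro (a | b) h <;> simp_all⟩

/-- The disjoint union of `ℓ` copies of the complete graph `K_t`. -/
def cliques (ℓ t : ℕ) : SimpleGraph (Fin ℓ × Fin t) where
  Adj x y := x.1 = y.1 ∧ x.2 ≠ y.2
  symm := ⟨fun _ _ ⟨h1, h2⟩ => ⟨h1.symm, h2.symm⟩⟩
  loopless := ⟨fun _ ⟨_, h⟩ => h rfl⟩

/-- The graph `K_1 ∨ (ℓ K_t ∪ m P_1)`. -/
def GExt (t ℓ m : ℕ) : SimpleGraph (Fin 1 ⊕ ((Fin ℓ × Fin t) ⊕ Fin m)) :=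
  gJoin (⊤ : SimpleGraph (Fin 1)) (gSum (cliques ℓ t) (⊥ : SimpleGraph (Fin m)))

/-- The constant `ξ_t` from the paper. -/
noncomputable def xiConst (t : ℕ) : ℤ :=
  if Even t then 2 * ⌊3 * (t : ℚ) / 4 - 1 - ((t : ℚ) - 1) ^ 2 / 9⌋
  else ⌊3 * (t : ℚ) / 2 - 2 - 2 * ((t : ℚ) - 1) ^ 2 / 9⌋

/-- `ℓ₀ = ⌊(2n + ξ_t)/(3t)⌋`. -/
noncomputable def ell0 (t n : ℕ) : ℕ :=
  (⌊(2 * (n : ℚ) + (xiConst t : ℚ)) / (3 * (t : ℚ))⌋).toNat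

/-!
Write `x` for the apex entry of an eigenvector of `K₁ ∨ q K_t` and `s i` for its sum over the
`i`-th clique. The eigen-equations give `(μ + 1 - t) s i = t x` and `μ x = ∑ i, s i`, so
`(μ (μ + 1 - t) - q t) x = 0`; if `x = 0` the vector vanishes unless `μ ∈ {-1, t - 1}`. Hence every
eigenvalue satisfies `μ (μ + 1 - t) ≤ q t`, i.e. lies between the roots `(t - 1)/2 ± r` of
`μ (μ + 1 - t) = q t`, and both roots are eigenvalues, with eigenvector `μ + 1 - t` on the apex
and `1` elsewhere.
-/

abbrev coneOverCliques (q t : ℕ) : SimpleGraph (Fin 1 ⊕ (Fin q × Fin t)) :=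
  gJoin (⊤ : SimpleGraph (Fin 1)) (cliques q t)

def adjEigenvalues {V : Type*} [Fintype V] (G : SimpleGraph V) : Set ℝ :=
  {μ | ∃ z : V → ℝ, z ≠ 0 ∧ adjMat G *ᵥ z = μ • z}

section Eigenvalues

variable {V : Type*} [Fintype V] {G : SimpleGraph V} {m : ℝ}

lemma lamMax_eq_of_isGreatest (h : IsGreatest (adjEigenvalues G) m) : lamMax G = m :=
  h.csSup_eq

lemma lamMin_eq_of_isLeast (h : IsLeast (adjEigenvalues G) m) : lamMin G = m :=
  h.csInf_eq

end Eigenvalues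

section Join

variable {α β : Type*} [Fintype α] [Fintype β] (G : SimpleGraph α) (H : SimpleGraph β)
  (z : α ⊕ β → ℝ)

lemma adjMat_gJoin_mulVec_inl (a : α) :
    (adjMat (gJoin G H) *ᵥ z) (Sum.inl a) =
      (adjMat G *ᵥ (z ∘ Sum.inl)) a + ∑ b, z (Sum.inr b) := by
  simp only [mulVec, dotProduct, Fintype.sum_sum_type]
  congr 1
  simp [adjMat, gJoin]

lemma adjMat_gJoin_mulVec_inr (b : β) :
    (adjMat (gJoin G H) *ᵥ z) (Sum.inr b) =
      ∑ a, z (Sum.inl a) + (adjMat H *ᵥ (z ∘ Sum.inr)) b := by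
  simp only [mulVec, dotProduct, Fintype.sum_sum_type]
  congr 1
  simp [adjMat, gJoin]

end Join

lemma adjMat_top_fin_one : adjMat (⊤ : SimpleGraph (Fin 1)) = 0 := by
  ext i j
  simp [adjMat, Subsingleton.elim i j]

lemma adjMat_cliques_mulVec_apply {q t : ℕ} (y : Fin q × Fin t → ℝ) (i : Fin q) (v : Fin t) :
    (adjMat (cliques q t) *ᵥ y) (i, v) = ∑ w, y (i, w) - y (i, v) := by
  have hentry : ∀ p : Fin q × Fin t, adjMat (cliques q t) (i, v) p
      = (if i = p.1 then 1 else 0) - (if (i, v) = p then 1 else 0) := by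
    rintro ⟨j, w⟩
    by_cases hij : i = j <;> by_cases hvw : v = w <;> simp [adjMat, cliques, hij, hvw]
  simp only [mulVec, dotProduct, hentry, sub_mul, Finset.sum_sub_distrib, ite_mul, one_mul,
    zero_mul, Finset.sum_ite_eq, Finset.mem_univ, if_true]
  rw [Fintype.sum_prod_type,
    Finset.sum_eq_single i (fun j _ hij => by simp [Ne.symm hij]) (by simp)]
  simp

section Cone

variable {q t : ℕ} {μ : ℝ}

lemma adjMat_coneOverCliques_mulVec_eq_smul_iff (z : Fin 1 ⊕ (Fin q × Fin t) → ℝ) :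
    adjMat (coneOverCliques q t) *ᵥ z = μ • z ↔
      μ * z (Sum.inl 0) = ∑ p, z (Sum.inr p) ∧
      ∀ i v, (μ + 1) * z (Sum.inr (i, v)) = z (Sum.inl 0) + ∑ w, z (Sum.inr (i, w)) := by
  simp only [funext_iff, Sum.forall, Fin.forall_fin_one, Prod.forall, Pi.smul_apply, smul_eq_mul,
    adjMat_gJoin_mulVec_inl, adjMat_gJoin_mulVec_inr, adjMat_top_fin_one, zero_mulVec,
    Pi.zero_apply, zero_add, Fin.sum_univ_one, Function.comp_apply, adjMat_cliques_mulVec_apply]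
  refine and_congr eq_comm (forall₂_congr fun i v => ?_)
  constructor <;> intro h <;> linarith

lemma mem_adjEigenvalues_coneOverCliques (hq : 0 < q) (ht : 0 < t)
    (hμ : μ * (μ + 1 - t) = q * t) : μ ∈ adjEigenvalues (coneOverCliques q t) := by
  refine ⟨Sum.elim (fun _ => μ + 1 - t) 1, fun h => ?_, ?_⟩
  · simpa using congrFun h (Sum.inr (⟨0, hq⟩, ⟨0, ht⟩))
  · rw [adjMat_coneOverCliques_mulVec_eq_smul_iff]
    simp [hμ]

lemma mul_eq_zero_of_mem_adjEigenvalues_coneOverCliques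
    (hμ : μ ∈ adjEigenvalues (coneOverCliques q t)) :
    (μ + 1) * (μ + 1 - t) * (μ * (μ + 1 - t) - q * t) = 0 := by
  obtain ⟨z, hz, hAz⟩ := hμ
  obtain ⟨hapex, hleaf⟩ := (adjMat_coneOverCliques_mulVec_eq_smul_iff z).1 hAz
  set x := z (Sum.inl 0)
  set s : Fin q → ℝ := fun i => ∑ w, z (Sum.inr (i, w))
  have hclique : ∀ i, (μ + 1 - t) * s i = t * x := by
    intro i
    have := Finset.sum_congr rfl fun v (_ : v ∈ Finset.univ) => hleaf i v
    simp [← Finset.mul_sum] at this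
    linarith
  have hx : (μ * (μ + 1 - t) - q * t) * x = 0 := by
    have : (μ + 1 - t) * ∑ i, s i = q * (t * x) := by simp [Finset.mul_sum, hclique]
    rw [Fintype.sum_prod_type] at hapex
    rw [← hapex] at this
    linear_combination this
  by_contra hne
  obtain ⟨⟨h1, h2⟩, h3⟩ := by simpa only [mul_ne_zero_iff] using hne
  have hx0 : x = 0 := (mul_eq_zero.mp hx).resolve_left h3
  apply hz
  funext u
  rcases u with a | ⟨i, v⟩
  · rw [Subsingleton.elim a 0]; exact hx0
  · have hsi : s i = 0 := by simpa [hx0, h2] using hclique i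
    have hleaf_iv : (μ + 1) * z (Sum.inr (i, v)) = 0 := by
      rw [hleaf i v, hx0, zero_add]; exact hsi
    exact (mul_eq_zero.mp hleaf_iv).resolve_left h1

lemma mul_add_one_sub_le_of_mem_adjEigenvalues_coneOverCliques (hq : 1 ≤ q)
    (hμ : μ ∈ adjEigenvalues (coneOverCliques q t)) : μ * (μ + 1 - t) ≤ q * t := by
  have hq' : (1 : ℝ) ≤ q := by exact_mod_cast hq
  have ht : (0 : ℝ) ≤ t := t.cast_nonneg
  rcases mul_eq_zero.mp (mul_eq_zero_of_mem_adjEigenvalues_coneOverCliques hμ) with h | h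
  · rcases mul_eq_zero.mp h with h | h
    · obtain rfl : μ = -1 := by linarith
      nlinarith
    · obtain rfl : μ = t - 1 := by linarith
      nlinarith
  · linarith

end Cone

/-- Eigenvalue formulas for `K_1 ∨ (q K_t)`. -/
theorem eig_join_K1_cliques (t q : ℕ) (ht : 2 ≤ t) (hq : 1 ≤ q) :
    lamMax (gJoin (⊤ : SimpleGraph (Fin 1)) (cliques q t)) =
        ((t : ℝ) - 1) / 2 + Real.sqrt ((q : ℝ) * t + ((t : ℝ) - 1) ^ 2 / 4) ∧
    lamMin (gJoin (⊤ : SimpleGraph (Fin 1)) (cliques q t)) =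
        ((t : ℝ) - 1) / 2 - Real.sqrt ((q : ℝ) * t + ((t : ℝ) - 1) ^ 2 / 4) ∧
    spread (gJoin (⊤ : SimpleGraph (Fin 1)) (cliques q t)) =
        Real.sqrt (4 * (q : ℝ) * t + ((t : ℝ) - 1) ^ 2) := by
  set c : ℝ := ((t : ℝ) - 1) / 2 with hc
  set r := Real.sqrt ((q : ℝ) * t + ((t : ℝ) - 1) ^ 2 / 4) with hr
  have hr_sq : r ^ 2 = q * t + c ^ 2 := by
    rw [hr, Real.sq_sqrt (by nlinarith [q.cast_nonneg (α := ℝ), t.cast_nonneg (α := ℝ)])]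
    ring
  have hroot : ∀ s, s ^ 2 = r ^ 2 → c + s ∈ adjEigenvalues (coneOverCliques q t) := fun s hs =>
    mem_adjEigenvalues_coneOverCliques (by omega) (by omega)
      (by linear_combination hs + hr_sq + 2 * (c + s) * hc)
  have hbound : ∀ μ ∈ adjEigenvalues (coneOverCliques q t), |μ - c| ≤ r := fun μ hμ =>
    Real.abs_le_sqrt (by
      linear_combination mul_add_one_sub_le_of_mem_adjEigenvalues_coneOverCliques hq hμ)
  have hmax : lamMax (coneOverCliques q t) = c + r :=
    lamMax_eq_of_isGreatest ⟨hroot r rfl, fun μ hμ => by linarith [(abs_le.mp (hbound μ hμ)).2]⟩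
  have hmin : lamMin (coneOverCliques q t) = c - r :=
    lamMin_eq_of_isLeast ⟨by simpa [sub_eq_add_neg] using hroot (-r) (neg_sq r),
      fun μ hμ => by linarith [(abs_le.mp (hbound μ hμ)).1]⟩
  refine ⟨hmax, hmin, ?_⟩
  rw [spread, hmax, hmin, show 4 * (q : ℝ) * t + ((t : ℝ) - 1) ^ 2 = 2 ^ 2 * (r ^ 2) by
    rw [hr_sq, hc]; ring, Real.sqrt_mul' _ (sq_nonneg r), Real.sqrt_sq two_pos.le,
    Real.sqrt_sq (Real.sqrt_nonneg _)]
  ring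
end

section
/- For all integers t ≥ 2 and n ≥ t+1, there exists a K_{2,t}-minor-free graph on n vertices whose spread is at least √(4n + t² − 6t + 1). (Such a graph is obtained as the disjoint union of K_1 ∨ (⌊(n−1)/t⌋ K_t) with n − 1 − t⌊(n−1)/t⌋ isolated vertices.) -/
open Finset SimpleGraph Matrix

attribute [local instance] Classical.propDecidable

/-!
The extremal graph is `K_1 ∨ (ℓ K_t ∪ m K_1)` with `n - 1 = ℓ t + m`, `m < t`.

Minor-freeness: deleting the apex leaves components of at most `t` vertices. In a `K_{2,t}`
model at most one branch set meets the apex; every other one is connected in the apex-deleted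
graph, hence inside a single component, and since `K_{2,t}` minus any vertex is still
connected, all `t + 1` of them share one component, which is too small to hold them.

Spread: the test vector equal to `a` on the apex, `1` on the cliques and `0` on the isolated
vertices has Rayleigh quotient `a + (t - 1)` whenever `a² + (t - 1) a = ℓ t`. The two roots
bound `λ_max` from below and `λ_min` from above, and they differ by `√((t - 1)² + 4 ℓ t)`,
which is at least `√(4n + t² - 6t + 1)` because `ℓ t ≥ n - t`.
-/

open Module End

namespace Matrix

variable {V K : Type*} [Fintype V] [DecidableEq V]

theorem finite_setOf_mulVec_eq_smul [Field K] (A : Matrix V V K) :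
    {μ : K | ∃ z : V → K, z ≠ 0 ∧ A *ᵥ z = μ • z}.Finite :=
  (finite_hasEigenvalue (toLin' A)).subset fun _ ⟨z, hz, hAz⟩ =>
    hasEigenvalue_of_hasEigenvector ⟨mem_eigenspace_iff.mpr (by simpa using hAz), hz⟩

theorem IsHermitian.exists_eigenvalue_ge_rayleigh {A : Matrix V V ℝ} (hA : A.IsHermitian)
    {x : V → ℝ} (hx : x ≠ 0) :
    ∃ μ, (∃ z : V → ℝ, z ≠ 0 ∧ A *ᵥ z = μ • z) ∧ x ⬝ᵥ A *ᵥ x ≤ μ * (x ⬝ᵥ x) := by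
  set y : EuclideanSpace ℝ V := WithLp.toLp 2 x
  have hy : y ≠ 0 := by simpa [y] using hx
  have : Nontrivial (EuclideanSpace ℝ V) := ⟨⟨y, 0, hy⟩⟩
  set T := A.toEuclideanLin
  have hT : T.IsSymmetric := isSymmetric_toEuclideanLin_iff.mpr hA
  set rayleigh : {u : EuclideanSpace ℝ V // u ≠ 0} → ℝ := fun u =>
    RCLike.re (inner ℝ (T u) u) / ‖(u : EuclideanSpace ℝ V)‖ ^ 2
  obtain ⟨z, hz⟩ := hT.hasEigenvalue_iSup_of_finiteDimensional.exists_hasEigenvector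
  refine ⟨⨆ u, rayleigh u, ⟨z.ofLp, by simpa using hz.2, ?_⟩, ?_⟩
  · simpa [T, rayleigh] using congrArg WithLp.ofLp hz.apply_eq_smul
  · have hbdd : BddAbove (Set.range rayleigh) := by
      refine ⟨‖LinearMap.toContinuousLinearMap T‖, ?_⟩
      rintro _ ⟨u, rfl⟩
      exact (abs_le.mp ((LinearMap.toContinuousLinearMap T).rayleighQuotient_le_norm u)).2
    have hnorm : ‖y‖ ^ 2 = x ⬝ᵥ x := by
      rw [← real_inner_self_eq_norm_sq, EuclideanSpace.inner_eq_star_dotProduct]; simp [y]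
    have hinner : RCLike.re (inner ℝ (T y) y) = x ⬝ᵥ A *ᵥ x := by
      simp [T, y, EuclideanSpace.inner_eq_star_dotProduct]
    have hle : rayleigh ⟨y, hy⟩ ≤ ⨆ u, rayleigh u := le_ciSup hbdd ⟨y, hy⟩
    simp only [rayleigh, hinner, hnorm] at hle
    rwa [div_le_iff₀ (hnorm ▸ pow_pos (norm_pos_iff.mpr hy) 2)] at hle

theorem IsHermitian.exists_eigenvalue_le_rayleigh {A : Matrix V V ℝ} (hA : A.IsHermitian)
    {x : V → ℝ} (hx : x ≠ 0) :
    ∃ μ, (∃ z : V → ℝ, z ≠ 0 ∧ A *ᵥ z = μ • z) ∧ μ * (x ⬝ᵥ x) ≤ x ⬝ᵥ A *ᵥ x := by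
  obtain ⟨μ, ⟨z, hz, hAz⟩, hle⟩ := hA.neg.exists_eigenvalue_ge_rayleigh hx
  refine ⟨-μ, ⟨z, hz, ?_⟩, ?_⟩
  · rw [neg_smul, ← hAz, neg_mulVec, neg_neg]
  · simpa [neg_mulVec] using neg_le_neg hle

end Matrix

section Spread

variable {V : Type*} [Fintype V] (G : SimpleGraph V)

theorem adjMat_isHermitian : (adjMat G).IsHermitian := by
  ext u v
  simp [adjMat, G.adj_comm]

theorem dotProduct_adjMat_mulVec_le_lamMax_mul (x : V → ℝ) :
    x ⬝ᵥ adjMat G *ᵥ x ≤ lamMax G * (x ⬝ᵥ x) := by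
  rcases eq_or_ne x 0 with rfl | hx
  · simp
  obtain ⟨μ, hμ, hle⟩ := (adjMat_isHermitian G).exists_eigenvalue_ge_rayleigh hx
  exact hle.trans (mul_le_mul_of_nonneg_right
    (le_csSup (finite_setOf_mulVec_eq_smul _).bddAbove hμ) (dotProduct_self_star_nonneg x))

theorem lamMin_mul_le_dotProduct_adjMat_mulVec (x : V → ℝ) :
    lamMin G * (x ⬝ᵥ x) ≤ x ⬝ᵥ adjMat G *ᵥ x := by
  rcases eq_or_ne x 0 with rfl | hx
  · simp
  obtain ⟨μ, hμ, hle⟩ := (adjMat_isHermitian G).exists_eigenvalue_le_rayleigh hx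
  exact (mul_le_mul_of_nonneg_right
    (csInf_le (finite_setOf_mulVec_eq_smul _).bddBelow hμ) (dotProduct_self_star_nonneg x)).trans hle

theorem sqrt_le_spread_of_rayleigh {L c : ℝ} (hL : 0 < L) (x : ℝ → V → ℝ)
    (hquad : ∀ a, x a ⬝ᵥ adjMat G *ᵥ x a = 2 * a * L + c * L)
    (hnorm : ∀ a, x a ⬝ᵥ x a = a ^ 2 + L) :
    √(c ^ 2 + 4 * L) ≤ spread G := by
  have hroot : ∀ a, a ^ 2 + c * a = L → lamMin G ≤ a + c ∧ a + c ≤ lamMax G := by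
    intro a ha
    have hpos : 0 < x a ⬝ᵥ x a := by rw [hnorm]; positivity
    have hR : x a ⬝ᵥ adjMat G *ᵥ x a = (a + c) * (x a ⬝ᵥ x a) := by
      rw [hquad, hnorm]; linear_combination (-a) * ha
    constructor
    · exact le_of_mul_le_mul_right (hR ▸ lamMin_mul_le_dotProduct_adjMat_mulVec G (x a)) hpos
    · exact le_of_mul_le_mul_right (hR ▸ dotProduct_adjMat_mulVec_le_lamMax_mul G (x a)) hpos
  set s := √(c ^ 2 + 4 * L)
  have hs : s ^ 2 = c ^ 2 + 4 * L := Real.sq_sqrt (by positivity)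
  have h₁ := (hroot ((s - c) / 2) (by linear_combination hs / 4)).2
  have h₂ := (hroot ((-s - c) / 2) (by linear_combination hs / 4)).1
  rw [spread]
  linarith

end Spread

namespace SimpleGraph

variable {V ι : Type*} {G : SimpleGraph V}

theorem Connected.eq_of_forall_adj {S : Set V} (hS : (G.induce S).Connected) {c : V → ι}
    (hc : ∀ ⦃x y⦄, x ∈ S → y ∈ S → G.Adj x y → c x = c y) {x y : V} (hx : x ∈ S) (hy : y ∈ S) :
    c x = c y := by
  suffices ∀ u v : S, Relation.ReflTransGen (G.induce S).Adj u v → c u = c v from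
    this ⟨x, hx⟩ ⟨y, hy⟩ ((reachable_iff_reflTransGen _ _).mp (hS.preconnected _ _))
  intro u v huv
  induction huv with
  | refl => rfl
  | tail _ hadj ih => exact ih.trans (hc (Subtype.prop _) (Subtype.prop _) hadj)

theorem completeBipartiteGraph_induce_compl_singleton_connected {α β : Type*} [Nontrivial α]
    [Nontrivial β] (w₀ : α ⊕ β) :
    ((completeBipartiteGraph α β).induce {w₀}ᶜ).Connected := by
  obtain ⟨a, ha⟩ : ∃ a : α, Sum.inl a ≠ w₀ := by
    rcases w₀ with a₀ | b₀
    · simpa using exists_ne a₀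
    · simp
  obtain ⟨b, hb⟩ : ∃ b : β, Sum.inr b ≠ w₀ := by
    rcases w₀ with a₀ | b₀
    · simp
    · simpa using exists_ne b₀
  have hab : ((completeBipartiteGraph α β).induce {w₀}ᶜ).Adj ⟨Sum.inr b, hb⟩ ⟨Sum.inl a, ha⟩ := by
    simp
  refine (connected_iff_exists_forall_reachable _).mpr ⟨⟨Sum.inr b, hb⟩, ?_⟩
  rintro ⟨a' | b', hw⟩
  · exact (Adj.reachable (by simp))
  · exact hab.reachable.trans (Adj.reachable (by simp))

theorem k2tMinorFree_of_forall_encard_le {t : ℕ} (ht : 2 ≤ t) (v : V) (c : V → ι)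
    (hc : ∀ ⦃x y⦄, x ≠ v → y ≠ v → G.Adj x y → c x = c y)
    (hfib : ∀ i, {x | x ≠ v ∧ c x = i}.encard ≤ t) : K2tMinorFree t G := by
  rintro ⟨φ, hne, hconn, hdisj, hadj⟩
  have : Nontrivial (Fin t) := Fin.nontrivial_iff_two_le.mpr ht
  obtain ⟨w₀, hw₀⟩ : ∃ w₀, ∀ w ∈ ({w₀}ᶜ : Set (Fin 2 ⊕ Fin t)), v ∉ φ w := by
    by_cases h : ∃ w₀, v ∈ φ w₀
    · obtain ⟨w₀, hv⟩ := h
      exact ⟨w₀, fun w hw hv' => Set.disjoint_left.mp (hdisj hw) hv' hv⟩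
    · exact ⟨Sum.inl 0, fun w _ hv => h ⟨w, hv⟩⟩
  choose rep hrep using hne
  have hne_v : ∀ w ∈ ({w₀}ᶜ : Set _), ∀ x ∈ φ w, x ≠ v := fun w hw x hx hxv =>
    hw₀ w hw (hxv ▸ hx)
  have hc_branch : ∀ w ∈ ({w₀}ᶜ : Set _), ∀ x ∈ φ w, c x = c (rep w) := fun w hw x hx =>
    (hconn w).eq_of_forall_adj (fun _ _ hx hy => hc (hne_v w hw _ hx) (hne_v w hw _ hy)) hx (hrep w)
  have hK := completeBipartiteGraph_induce_compl_singleton_connected (α := Fin 2) (β := Fin t) w₀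
  obtain ⟨w₁, hw₁⟩ := hK.nonempty.some
  have hc_rep : ∀ w ∈ ({w₀}ᶜ : Set _), c (rep w) = c (rep w₁) := fun w hw =>
    hK.eq_of_forall_adj (c := c ∘ rep)
      (fun w w' hw hw' hww' => by
        obtain ⟨x, hx, y, hy, hxy⟩ := hadj hww'
        rw [Function.comp_apply, Function.comp_apply, ← hc_branch w hw x hx,
          ← hc_branch w' hw' y hy]
        exact hc (hne_v w hw x hx) (hne_v w' hw' y hy) hxy) hw hw₁
  have hinj : Set.InjOn rep {w₀}ᶜ := fun w _ w' _ h => by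
    by_contra hww'
    exact Set.disjoint_left.mp (hdisj hww') (hrep w) (h ▸ hrep w')
  have hle : ({w₀}ᶜ : Set (Fin 2 ⊕ Fin t)).encard ≤ t := by
    rw [← hinj.encard_image]
    refine (Set.encard_le_encard ?_).trans (hfib (c (rep w₁)))
    rintro _ ⟨w, hw, rfl⟩
    exact ⟨hne_v w hw _ (hrep w), hc_rep w hw⟩
  have hcard : ({w₀}ᶜ : Set (Fin 2 ⊕ Fin t)).encard = t + 1 := by
    rw [← Finset.coe_singleton, ← Finset.coe_compl, Set.encard_coe_eq_coe_finsetCard,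
      Finset.card_compl]
    simp [add_comm]
  rw [hcard] at hle
  norm_cast at hle
  omega

end SimpleGraph

section Construction

variable {t ℓ m : ℕ}

def cliqueLabel (t ℓ m : ℕ) : Fin 1 ⊕ ((Fin ℓ × Fin t) ⊕ Fin m) → Option (Fin ℓ ⊕ Fin m) :=
  Sum.elim (fun _ => none) (fun w => some (Sum.map Prod.fst id w))

theorem k2tMinorFree_GExt (ht : 2 ≤ t) : K2tMinorFree t (GExt t ℓ m) := by
  refine k2tMinorFree_of_forall_encard_le ht (Sum.inl 0) (cliqueLabel t ℓ m) ?_ ?_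
  · rintro (z | (p | i)) (z' | (q | i')) hx hy hadj <;>
      simp_all [GExt, gJoin, gSum, cliques, cliqueLabel, Subsingleton.elim _ (0 : Fin 1)]
  · rintro (_ | (j | i))
    · refine (Set.encard_eq_zero.mpr (Set.eq_empty_iff_forall_notMem.mpr ?_)).trans_le zero_le
      rintro (z | w) <;> simp [cliqueLabel, Subsingleton.elim _ (0 : Fin 1)]
    · calc _ ≤ (Set.range fun k : Fin t => (Sum.inr (Sum.inl (j, k)) : Fin 1 ⊕ _)).encard := by
            refine Set.encard_le_encard ?_
            rintro (z | (⟨j', k⟩ | i)) ⟨-, h⟩ <;> simp_all [cliqueLabel]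
        _ ≤ t := by
          rw [← Set.image_univ]
          exact (Set.encard_image_le _ _).trans (by simp)
    · calc _ ≤ ({Sum.inr (Sum.inr i)} : Set (Fin 1 ⊕ ((Fin ℓ × Fin t) ⊕ Fin m))).encard := by
            refine Set.encard_le_encard ?_
            rintro (z | (⟨j', k⟩ | i')) ⟨-, h⟩ <;> simp_all [cliqueLabel]
        _ ≤ t := by rw [Set.encard_singleton]; exact_mod_cast (by omega : 1 ≤ t)

def testVec (t ℓ m : ℕ) (a : ℝ) : Fin 1 ⊕ ((Fin ℓ × Fin t) ⊕ Fin m) → ℝ :=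
  Sum.elim (fun _ => a) (Sum.elim (fun _ => 1) (fun _ => 0))

theorem adjMat_GExt_mulVec_testVec (a : ℝ) :
    adjMat (GExt t ℓ m) *ᵥ testVec t ℓ m a =
      Sum.elim (fun _ => (ℓ * t : ℝ)) (Sum.elim (fun _ => a + (t - 1)) (fun _ => a)) := by
  ext (z | (p | i))
  · obtain rfl := Subsingleton.elim z 0
    simp [mulVec, dotProduct, adjMat, GExt, gJoin, gSum, testVec, Fintype.sum_sum_type]
  · simp [mulVec, dotProduct, adjMat, GExt, gJoin, gSum, cliques, testVec, Fintype.sum_sum_type,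
      Fintype.sum_prod_type]
    rw [Finset.sum_eq_single p.1 (fun b _ hb => by simp [Ne.symm hb]) (by simp)]
    simp [Finset.sum_ite, Finset.filter_ne, Nat.cast_sub (p.2.pos : 1 ≤ t)]
  · simp [mulVec, dotProduct, adjMat, GExt, gJoin, gSum, testVec, Fintype.sum_sum_type]

theorem testVec_dotProduct_self (a : ℝ) :
    testVec t ℓ m a ⬝ᵥ testVec t ℓ m a = a ^ 2 + ℓ * t := by
  simp [testVec, dotProduct, Fintype.sum_sum_type, sq]

theorem testVec_dotProduct_adjMat_mulVec (a : ℝ) :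
    testVec t ℓ m a ⬝ᵥ adjMat (GExt t ℓ m) *ᵥ testVec t ℓ m a =
      2 * a * (ℓ * t) + (t - 1) * (ℓ * t) := by
  rw [adjMat_GExt_mulVec_testVec]
  simp [testVec, dotProduct, Fintype.sum_sum_type]
  ring

theorem sqrt_le_spread_GExt (ht : 0 < t) (hℓ : 0 < ℓ) :
    √((t - 1 : ℝ) ^ 2 + 4 * (ℓ * t)) ≤ spread (GExt t ℓ m) :=
  sqrt_le_spread_of_rayleigh _ (by positivity) (testVec t ℓ m) testVec_dotProduct_adjMat_mulVec
    testVec_dotProduct_self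

end Construction

/-- For `t ≥ 2` and `n ≥ t+1` there is a `K_{2,t}`-minor-free graph on `n`
vertices with spread at least `√(4n + t² - 6t + 1)`. -/
theorem exists_K2tFree_large_spread (t n : ℕ) (ht : 2 ≤ t) (hn : t + 1 ≤ n) :
    ∃ (V : Type) (inst : Fintype V) (G : SimpleGraph V),
      @Fintype.card V inst = n ∧ K2tMinorFree t G ∧
      Real.sqrt (4 * (n : ℝ) + (t : ℝ) ^ 2 - 6 * t + 1) ≤ @spread V inst G := by
  obtain ⟨ℓ, m, hdiv, hm, hℓ⟩ : ∃ ℓ m, ℓ * t + m = n - 1 ∧ m < t ∧ 0 < ℓ :=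
    ⟨(n - 1) / t, (n - 1) % t, Nat.div_add_mod' _ _, Nat.mod_lt _ (by omega),
      Nat.div_pos (by omega) (by omega)⟩
  refine ⟨_, inferInstance, GExt t ℓ m, ?_, k2tMinorFree_GExt ht, ?_⟩
  · simp only [Fintype.card_sum, Fintype.card_prod, Fintype.card_fin]
    omega
  · have hcount : (n : ℝ) ≤ ℓ * t + t := by exact_mod_cast (by omega : n ≤ ℓ * t + t)
    calc √(4 * (n : ℝ) + t ^ 2 - 6 * t + 1) ≤ √((t - 1 : ℝ) ^ 2 + 4 * (ℓ * t)) :=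
          Real.sqrt_le_sqrt (by linarith)
      _ ≤ spread (GExt t ℓ m) := sqrt_le_spread_GExt (by omega) hℓ
end

section
/- Let t ≥ 2 and let G be a K_{2,t}-minor-free graph. Let λ ≤ 0 be a real eigenvalue of the adjacency matrix A(G) with eigenvector z. Then for every vertex u with z_u > 0, λ² z_u ≤ d(u) z_u + (t−1) Σ_{y : z_y > 0} z_y, and for every vertex u with z_u < 0, λ² |z_u| ≤ d(u) |z_u| + (t−1) Σ_{y : z_y < 0} |z_y|, where d(u) denotes the degree of u in G. -/
open Finset SimpleGraph Matrix

attribute [local instance] Classical.propDecidable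

/-!
Squaring the eigenvalue equation gives `λ² z_u = ∑_w (A²)_{uw} z_w`, where `(A²)_{uu} = d(u)` and,
for `w ≠ u`, `(A²)_{uw}` counts the common neighbours of `u` and `w`. Two vertices with `t` common
neighbours span a copy of `K_{2,t}`, which is in particular a minor, so `(A²)_{uw} ≤ t - 1`;
dropping the terms with `z_w ≤ 0` gives the bound. The case `z_u < 0` is the same bound for `-z`.
-/

namespace SimpleGraph

variable {V : Type*} {G : SimpleGraph V}

theorem IsContained.isMinorOf {W : Type*} {H : SimpleGraph W} (h : H ⊑ G) : H.IsMinorOf G := by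
  obtain ⟨f⟩ := h
  exact ⟨fun w => {f w}, fun _ => Set.singleton_nonempty _,
    fun _ => (connected_iff _).mpr ⟨Preconnected.of_subsingleton, inferInstance⟩,
    fun _ _ hne => Set.disjoint_singleton.mpr (f.injective.ne hne),
    fun _ _ hadj => ⟨_, rfl, _, rfl, f.toHom.map_adj hadj⟩⟩

variable [Fintype V]

theorem completeBipartiteGraph_isContained_of_le_card_commonNeighbors {u w : V} {t : ℕ}
    (huw : u ≠ w) (ht : t ≤ Fintype.card (G.commonNeighbors u w)) :
    completeBipartiteGraph (Fin 2) (Fin t) ⊑ G := by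
  rw [← Set.toFinset_card] at ht
  obtain ⟨right, hright, hcard⟩ := Finset.exists_subset_card_eq ht
  refine completeBipartiteGraph_isContained_iff.mpr
    ⟨{u, w}, right, by simp [huw], by simpa using hcard, fun a ha b hb => ?_⟩
  have hb := (G.mem_commonNeighbors).mp (Set.mem_toFinset.mp (hright hb))
  rcases (by simpa using ha : a = u ∨ a = w) with rfl | rfl
  exacts [hb.1, hb.2]

theorem card_commonNeighbors_lt_of_k2tMinorFree {t : ℕ} (hG : K2tMinorFree t G) {u w : V}
    (huw : u ≠ w) : Fintype.card (G.commonNeighbors u w) < t :=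
  lt_of_not_ge fun ht =>
    hG (completeBipartiteGraph_isContained_of_le_card_commonNeighbors huw ht).isMinorOf

theorem adjMatrix_mul_self_apply {α : Type*} [NonAssocSemiring α] [DecidableRel G.Adj] (u w : V) :
    (G.adjMatrix α * G.adjMatrix α) u w = Fintype.card (G.commonNeighbors u w) := by
  rw [adjMatrix_mul_apply, ← Set.toFinset_card]
  simp only [adjMatrix_apply, sum_boole]
  congr 2
  ext v
  simp [G.adj_comm v w, mem_commonNeighbors]

theorem sq_mul_apply_eq_degree_mul_add_sum {lam : ℝ} {z : V → ℝ}
    (heig : G.adjMatrix ℝ *ᵥ z = lam • z) (u : V) :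
    lam ^ 2 * z u = G.degree u * z u +
      ∑ w ∈ univ.erase u, (Fintype.card (G.commonNeighbors u w) : ℝ) * z w := by
  have hsq : (G.adjMatrix ℝ * G.adjMatrix ℝ) *ᵥ z = lam ^ 2 • z := by
    rw [← mulVec_mulVec, heig, mulVec_smul, heig, smul_smul, sq]
  rw [← adjMatrix_mul_self_apply_self, ← smul_eq_mul, ← Pi.smul_apply, ← hsq, mulVec,
    dotProduct, ← add_sum_erase _ _ (mem_univ u)]
  simp only [adjMatrix_mul_self_apply]

end SimpleGraph

theorem adjMat_eq_adjMatrix {V : Type*} [Fintype V] (G : SimpleGraph V) :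
    adjMat G = G.adjMatrix ℝ :=
  rfl

theorem Finset.sum_mul_le_mul_sum_filter_pos {ι α : Type*} [Ring α] [LinearOrder α]
    [IsStrictOrderedRing α] (s : Finset ι) {a z : ι → α} {c : α}
    (ha : ∀ i ∈ s, 0 ≤ a i ∧ a i ≤ c) :
    ∑ i ∈ s, a i * z i ≤ c * ∑ i ∈ s with 0 < z i, z i := by
  rw [mul_sum, sum_filter]
  refine sum_le_sum fun i hi => ?_
  split_ifs with hz
  · exact mul_le_mul_of_nonneg_right (ha i hi).2 hz.le
  · exact mul_nonpos_of_nonneg_of_nonpos (ha i hi).1 (not_lt.mp hz)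

theorem K2tMinorFree.eigenvalue_sq_mul_le {t : ℕ} (ht : 1 ≤ t) {V : Type*} [Fintype V]
    {G : SimpleGraph V} (hG : K2tMinorFree t G) {lam : ℝ} {z : V → ℝ} (heig : adjMat G *ᵥ z = lam • z) (u : V) :
    lam ^ 2 * z u ≤ G.degree u * z u + ((t : ℝ) - 1) * ∑ y with 0 < z y, z y := by
  have hcommon : ∀ w ∈ univ.erase u,
      0 ≤ (Fintype.card (G.commonNeighbors u w) : ℝ) ∧
        (Fintype.card (G.commonNeighbors u w) : ℝ) ≤ t - 1 := by
    intro w hw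
    have := card_commonNeighbors_lt_of_k2tMinorFree hG (ne_of_mem_erase hw).symm
    refine ⟨Nat.cast_nonneg _, ?_⟩
    rw [le_sub_iff_add_le]
    exact_mod_cast this
  have hpos_sum : ∑ y ∈ univ.erase u with 0 < z y, z y ≤ ∑ y with 0 < z y, z y :=
    sum_le_sum_of_subset_of_nonneg (filter_subset_filter _ (subset_univ _))
      fun y hy _ => (mem_filter.mp hy).2.le
  have ht' : (0 : ℝ) ≤ t - 1 := sub_nonneg.mpr (by exact_mod_cast ht)
  calc lam ^ 2 * z u
      = G.degree u * z u +
          ∑ w ∈ univ.erase u, (Fintype.card (G.commonNeighbors u w) : ℝ) * z w :=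
        sq_mul_apply_eq_degree_mul_add_sum (adjMat_eq_adjMatrix G ▸ heig) u
    _ ≤ G.degree u * z u + ((t : ℝ) - 1) * ∑ y ∈ univ.erase u with 0 < z y, z y :=
        add_le_add_right (sum_mul_le_mul_sum_filter_pos _ hcommon) _
    _ ≤ G.degree u * z u + ((t : ℝ) - 1) * ∑ y with 0 < z y, z y :=
        add_le_add_right (mul_le_mul_of_nonneg_left hpos_sum ht') _

theorem nonpos_eigenvalue_local_bound_general (t : ℕ) (ht : 2 ≤ t) {V : Type} [Fintype V]
    (G : SimpleGraph V) (hG : K2tMinorFree t G)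
    (lam : ℝ) (z : V → ℝ)
    (heig : adjMat G *ᵥ z = lam • z) :
    (∀ u : V, 0 < z u →
      lam ^ 2 * z u ≤ (G.degree u : ℝ) * z u +
        ((t : ℝ) - 1) * ∑ y ∈ Finset.univ.filter (fun y => 0 < z y), z y) ∧
    (∀ u : V, z u < 0 →
      lam ^ 2 * |z u| ≤ (G.degree u : ℝ) * |z u| +
        ((t : ℝ) - 1) * ∑ y ∈ Finset.univ.filter (fun y => z y < 0), |z y|) := by
  have ht1 : 1 ≤ t := by omega
  refine ⟨fun u _ => hG.eigenvalue_sq_mul_le ht1 heig u, fun u hu => ?_⟩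
  have heig_neg : adjMat G *ᵥ (-z) = lam • -z := by rw [mulVec_neg, heig, smul_neg]
  have hsum : ∑ y with 0 < (-z) y, (-z) y = ∑ y with z y < 0, |z y| := by
    simp only [Pi.neg_apply, neg_pos]
    exact sum_congr rfl fun y hy => (abs_of_neg (mem_filter.mp hy).2).symm
  have hbound := hG.eigenvalue_sq_mul_le ht1 heig_neg u
  rw [hsum] at hbound
  simpa only [abs_of_neg hu, Pi.neg_apply] using hbound

/-- Local estimates for an eigenvector of a nonpositive eigenvalue of a
`K_{2,t}`-minor-free graph. -/
theorem nonpos_eigenvalue_local_bound (t : ℕ) (ht : 2 ≤ t) {V : Type} [Fintype V]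
    (G : SimpleGraph V) (hG : K2tMinorFree t G)
    (lam : ℝ) (hlam : lam ≤ 0) (z : V → ℝ) (hz : z ≠ 0)
    (heig : adjMat G *ᵥ z = lam • z) :
    (∀ u : V, 0 < z u →
      lam ^ 2 * z u ≤ (G.degree u : ℝ) * z u +
        ((t : ℝ) - 1) * ∑ y ∈ Finset.univ.filter (fun y => 0 < z y), z y) ∧
    (∀ u : V, z u < 0 →
      lam ^ 2 * |z u| ≤ (G.degree u : ℝ) * |z u| +
        ((t : ℝ) - 1) * ∑ y ∈ Finset.univ.filter (fun y => z y < 0), |z y|) :=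
  nonpos_eigenvalue_local_bound_general t ht G hG lam z heig
end

section
/- Let t ≥ 2 be an integer, C1 > 0, and let G be a K_{2,t}-minor-free graph on n vertices having a vertex w0 with degree d(w0) ≥ n − C1√n such that every vertex u ≠ w0 has degree d(u) ≤ 2C1√n. Then for every vertex v ≠ w0, the number of ordered pairs (s,u) of vertices with s ∈ N(v)∖{w0} and u ∈ N(s)∖{w0} is at most (5t−1)·C1·√n. -/
open Finset SimpleGraph Matrix

attribute [local instance] Classical.propDecidable

/-!
Any two distinct vertices of a `K_{2,t}`-minor-free graph have at most `t - 1` common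
neighbours. Split the walks `v - s - u` by whether `u` is adjacent to `w₀`. If it is, `u` is a
common neighbour of `s ≠ w₀` and `w₀`, so there are at most `(t - 1) d(v)` such walks. If it is
not, `u` is one of the at most `C₁√n` vertices outside `N(w₀) ∪ {w₀}` and `s` is a common
neighbour of `v` and `u`, giving at most `(t - 1) C₁√n + d(v)` walks (the term `d(v)` accounts
for `u = v`). Together with `d(v) ≤ 2C₁√n` this gives `(3t - 1) C₁√n`.
-/

theorem SimpleGraph.IsContained.isMinorOf_s9 {V W : Type*} {G : SimpleGraph V} {H : SimpleGraph W}
    (h : H ⊑ G) : H.IsMinorOf G := by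
  obtain ⟨f⟩ := h
  refine ⟨fun x => {f x}, fun _ => Set.singleton_nonempty _,
    fun _ => (connected_iff _).2 ⟨Preconnected.of_subsingleton, inferInstance⟩,
    fun _ _ hne => Set.disjoint_singleton.2 (f.injective.ne hne),
    fun a b hab => ⟨f a, rfl, f b, rfl, f.toHom.map_adj hab⟩⟩

theorem K2tMinorFree.card_inter_neighborFinset_lt {V : Type*} [Fintype V] {t : ℕ}
    {G : SimpleGraph V} (hG : K2tMinorFree t G) {a b : V} (hab : a ≠ b) :
    #(G.neighborFinset a ∩ G.neighborFinset b) < t := by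
  by_contra! h
  obtain ⟨s, hs, hst⟩ := exists_subset_card_eq h
  refine hG (IsContained.isMinorOf_s9 (completeBipartiteGraph_isContained_iff.2
    ⟨{a, b}, s, by simp [card_pair hab], by simp [hst], fun x hx y hy => ?_⟩))
  have hy' := mem_inter.1 (hs hy)
  simp only [coe_insert, coe_singleton, Set.mem_insert_iff, Set.mem_singleton_iff] at hx
  rcases hx with rfl | rfl
  · exact (mem_neighborFinset _ _ _).1 hy'.1
  · exact (mem_neighborFinset _ _ _).1 hy'.2

namespace SimpleGraph

variable {V : Type*} [Fintype V] {G : SimpleGraph V} {k : ℕ}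

theorem card_adj_adj_fst_mem_le
    (hk : ∀ a b, a ≠ b → #(G.neighborFinset a ∩ G.neighborFinset b) ≤ k)
    {S : Finset V} {w : V} (hw : w ∉ S) :
    #{p : V × V | p.1 ∈ S ∧ G.Adj p.1 p.2 ∧ G.Adj w p.2} ≤ k * #S := by
  refine card_le_mul_card_image_of_maps_to (f := Prod.fst) (fun p hp => (mem_filter.1 hp).2.1) k
    fun s hs => ?_
  refine (card_le_card_of_injOn Prod.snd (fun p hp => ?_) fun p hp q hq h => ?_).trans
    (hk s w (ne_of_mem_of_not_mem hs hw))
  · simp only [coe_filter, mem_filter, mem_univ, true_and, Set.mem_ofPred_eq] at hp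
    simp [← hp.2, hp.1.2.1, hp.1.2.2]
  · simp only [coe_filter, mem_filter, mem_univ, true_and, Set.mem_ofPred_eq] at hp hq
    exact Prod.ext (hp.2.trans hq.2.symm) h

theorem card_adj_adj_snd_mem_le
    (hk : ∀ a b, a ≠ b → #(G.neighborFinset a ∩ G.neighborFinset b) ≤ k)
    (v : V) (U : Finset V) :
    #{p : V × V | G.Adj v p.1 ∧ G.Adj p.1 p.2 ∧ p.2 ∈ U} ≤ k * #U + G.degree v := by
  have hfiber : ∀ u, #{p ∈ {p : V × V | G.Adj v p.1 ∧ G.Adj p.1 p.2 ∧ p.2 ∈ U} | p.2 = u}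
      ≤ #(G.neighborFinset v ∩ G.neighborFinset u) := by
    intro u
    refine card_le_card_of_injOn Prod.fst (fun p hp => ?_) fun p hp q hq h => ?_
    · simp only [coe_filter, mem_filter, mem_univ, true_and, Set.mem_ofPred_eq] at hp
      simp [← hp.2, hp.1.1, hp.1.2.1.symm]
    · simp only [coe_filter, mem_filter, mem_univ, true_and, Set.mem_ofPred_eq] at hp hq
      exact Prod.ext h (hp.2.trans hq.2.symm)
  rw [card_eq_sum_card_fiberwise (f := Prod.snd) (t := U) fun p hp => (mem_filter.1 hp).2.2.2]
  calc _ ≤ ∑ u ∈ U, (k + if u = v then G.degree v else 0) := by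
        refine sum_le_sum fun u _ => (hfiber u).trans ?_
        by_cases huv : u = v
        · subst huv
          simp [card_neighborFinset_eq_degree]
        · simpa [huv] using hk v u (Ne.symm huv)
    _ ≤ k * #U + G.degree v := by
        rw [sum_add_distrib, sum_const, smul_eq_mul, mul_comm, sum_ite_eq']
        gcongr
        split_ifs <;> simp

theorem card_twoStep_avoiding_le
    (hk : ∀ a b, a ≠ b → #(G.neighborFinset a ∩ G.neighborFinset b) ≤ k) (v w : V) :
    #{p : V × V | G.Adj v p.1 ∧ p.1 ≠ w ∧ G.Adj p.1 p.2 ∧ p.2 ≠ w}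
      ≤ k * G.degree v + (k * #(insert w (G.neighborFinset w))ᶜ + G.degree v) := by
  calc _ ≤ #{p : V × V | p.1 ∈ (G.neighborFinset v).erase w ∧ G.Adj p.1 p.2 ∧ G.Adj w p.2}
        + #{p : V × V | G.Adj v p.1 ∧ G.Adj p.1 p.2 ∧ p.2 ∈ (insert w (G.neighborFinset w))ᶜ} := by
        refine (card_le_card fun p hp => ?_).trans (card_union_le _ _)
        simp only [mem_filter, mem_univ, true_and, mem_union, mem_erase, mem_neighborFinset,
          mem_compl, mem_insert] at hp ⊢
        tauto
    _ ≤ _ := add_le_add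
        ((card_adj_adj_fst_mem_le hk (notMem_erase w _)).trans
          (Nat.mul_le_mul_left k (card_erase_le)))
        (card_adj_adj_snd_mem_le hk v _)

end SimpleGraph

theorem count_pairs_avoiding_w0_general (t : ℕ) (C1 : ℝ)
    {V : Type} [Fintype V] (n : ℕ) (G : SimpleGraph V) (hcard : Fintype.card V = n)
    (hG : K2tMinorFree t G) (w0 : V)
    (hw0 : (n : ℝ) - C1 * Real.sqrt n ≤ (G.degree w0 : ℝ))
    (hdeg : ∀ u : V, u ≠ w0 → (G.degree u : ℝ) ≤ 2 * C1 * Real.sqrt n)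
    (v : V) (hv : v ≠ w0) :
    ((Finset.univ.filter (fun p : V × V =>
        G.Adj v p.1 ∧ p.1 ≠ w0 ∧ G.Adj p.1 p.2 ∧ p.2 ≠ w0)).card : ℝ)
      ≤ (5 * (t : ℝ) - 1) * C1 * Real.sqrt n := by
  have ht : 1 ≤ t := Nat.one_le_of_lt (hG.card_inter_neighborFinset_lt hv)
  have hcount := card_twoStep_avoiding_le
    (fun a b hab => Nat.le_pred_of_lt (hG.card_inter_neighborFinset_lt hab)) v w0
  set U := (insert w0 (G.neighborFinset w0))ᶜ
  have hU : #U + (G.degree w0 + 1) = n := by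
    rw [← hcard, ← card_compl_add_card (insert w0 (G.neighborFinset w0)),
      card_insert_of_notMem (notMem_neighborFinset_self G w0), card_neighborFinset_eq_degree]
  have hU' : (#U : ℝ) ≤ C1 * √n := by
    have : (#U : ℝ) + (G.degree w0 + 1) = n := by exact_mod_cast hU
    linarith
  have hv' := hdeg v hv
  have hCn : 0 ≤ C1 * √n := by linarith [(G.degree v).cast_nonneg (α := ℝ)]
  have ht' : (0 : ℝ) ≤ t - 1 := by simp [ht]
  calc _ ≤ ((t - 1 : ℕ) : ℝ) * G.degree v + (((t - 1 : ℕ) : ℝ) * #U + G.degree v) := by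
        exact_mod_cast hcount
    _ = (t - 1) * G.degree v + ((t - 1) * #U + G.degree v) := by rw [Nat.cast_pred ht]
    _ ≤ (t - 1) * (2 * C1 * √n) + ((t - 1) * (C1 * √n) + 2 * C1 * √n) := by gcongr
    _ ≤ (5 * t - 1) * C1 * √n := by nlinarith

/-- Counting walks of length two avoiding the dominant vertex `w₀`. -/
theorem count_pairs_avoiding_w0 (t : ℕ) (ht : 2 ≤ t) (C1 : ℝ) (hC1 : 0 < C1)
    {V : Type} [Fintype V] (n : ℕ) (G : SimpleGraph V) (hcard : Fintype.card V = n)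
    (hG : K2tMinorFree t G) (w0 : V)
    (hw0 : (n : ℝ) - C1 * Real.sqrt n ≤ (G.degree w0 : ℝ))
    (hdeg : ∀ u : V, u ≠ w0 → (G.degree u : ℝ) ≤ 2 * C1 * Real.sqrt n)
    (v : V) (hv : v ≠ w0) :
    ((Finset.univ.filter (fun p : V × V =>
        G.Adj v p.1 ∧ p.1 ≠ w0 ∧ G.Adj p.1 p.2 ∧ p.2 ≠ w0)).card : ℝ)
      ≤ (5 * (t : ℝ) - 1) * C1 * Real.sqrt n :=
  count_pairs_avoiding_w0_general t C1 n G hcard hG w0 hw0 hdeg v hv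
end

section
/- Let G be a graph on n ≥ 2 vertices with a vertex u0 adjacent to all other vertices, let H = G − u0 with adjacency matrix A_H, and let 1 denote the all-ones vector indexed by V(H). Let λ be a real eigenvalue of A(G) such that |λ| is strictly greater than the spectral radius of A_H and such that A(G) has an eigenvector α for λ with α_{u0} = 1. Then λ² = (n−1) + Σ_{k=1}^∞ λ^{−k} (1ᵀ A_H^k 1), where the series converges. -/
open Finset SimpleGraph Matrix

attribute [local instance] Classical.propDecidable

/-!
Write `β` for the restriction of `α` to `V(H)`. The eigenvalue equation at the vertices of `H`
reads `(λ - A_H) β = 1`, and at the dominating vertex `u₀` it reads `1ᵀβ = λ`. Diagonalising the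
symmetric matrix `A_H = U D Uᵀ`, whose eigenvalues lie in `(-|λ|, |λ|)`, the series
`∑_{k ≥ 1} λ^{-k} A_H^k` sums entrywise on `D` to `U diag(μ / (λ - μ)) Uᵀ`, and this matrix `S`
satisfies `S (λ - A_H) = A_H`. Hence `∑_{k ≥ 1} λ^{-k} 1ᵀ A_H^k 1 = 1ᵀ S (λ - A_H) β = 1ᵀ A_H β
= 1ᵀ (λβ - 1) = λ² - (n - 1)`.
-/

theorem hasSum_inv_pow_mul_pow {lam x : ℝ} (hx : |x| < |lam|) :
    HasSum (fun k : ℕ => (lam ^ (k + 1))⁻¹ * x ^ (k + 1)) (x / (lam - x)) := by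
  have hlam : lam ≠ 0 := abs_pos.mp ((abs_nonneg x).trans_lt hx)
  have hx' : lam - x ≠ 0 := sub_ne_zero.mpr fun h => by simp [h] at hx
  have hr : |x / lam| < 1 := by rwa [abs_div, div_lt_one (abs_pos.mpr hlam)]
  have hterm : (fun k : ℕ => (lam ^ (k + 1))⁻¹ * x ^ (k + 1)) =
      fun k => x / lam * (x / lam) ^ k := by
    ext k
    rw [div_pow]
    field_simp
    ring
  have hval : x / (lam - x) = x / lam * (1 - x / lam)⁻¹ := by
    rw [one_sub_div hlam]
    field_simp
  rw [hterm, hval]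
  exact (hasSum_geometric_of_abs_lt_one hr).mul_left (x / lam)

namespace Matrix

open Unitary

variable {ι : Type*} [Fintype ι] [DecidableEq ι]

theorem hasSum_inv_pow_smul_diagonal_pow {lam : ℝ} {d : ι → ℝ} (hd : ∀ i, |d i| < |lam|) :
    HasSum (fun k : ℕ => (lam ^ (k + 1))⁻¹ • diagonal d ^ (k + 1))
      (diagonal fun i => d i / (lam - d i)) := by
  simp_rw [diagonal_pow, ← diagonal_smul]
  exact (Pi.hasSum.mpr fun i => hasSum_inv_pow_mul_pow (hd i)).matrix_diagonal

theorem hasSum_inv_pow_smul_conj_diagonal_pow (U : unitaryGroup ι ℝ) {lam : ℝ} {d : ι → ℝ}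
    (hd : ∀ i, |d i| < |lam|) :
    HasSum (fun k : ℕ => (lam ^ (k + 1))⁻¹ • conjStarAlgAut ℝ _ U (diagonal d) ^ (k + 1))
      (conjStarAlgAut ℝ _ U (diagonal fun i => d i / (lam - d i))) := by
  have hcont : Continuous (conjStarAlgAut ℝ (Matrix ι ι ℝ) U) :=
    (continuous_const.matrix_mul continuous_id).matrix_mul continuous_const
  convert (hasSum_inv_pow_smul_diagonal_pow hd).map _ hcont using 2 with k
  simp only [Function.comp_apply, map_smul, map_pow]

theorem conj_diagonal_div_mul_smul_one_sub (U : unitaryGroup ι ℝ) {lam : ℝ} {d : ι → ℝ}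
    (hd : ∀ i, d i ≠ lam) :
    conjStarAlgAut ℝ _ U (diagonal fun i => d i / (lam - d i)) *
      (lam • 1 - conjStarAlgAut ℝ _ U (diagonal d)) = conjStarAlgAut ℝ _ U (diagonal d) := by
  rw [← map_one (conjStarAlgAut ℝ _ U), ← map_smul, ← map_sub, ← map_mul, smul_one_eq_diagonal,
    diagonal_sub, diagonal_mul_diagonal]
  congr 2 with i
  have : lam - d i ≠ 0 := sub_ne_zero.mpr (hd i).symm
  field_simp

theorem IsHermitian.eq_conj_diagonal {A : Matrix ι ι ℝ} (hA : A.IsHermitian) :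
    A = conjStarAlgAut ℝ _ hA.eigenvectorUnitary (diagonal hA.eigenvalues) := by
  simpa [RCLike.ofReal_real_eq_id] using hA.spectral_theorem

theorem IsHermitian.abs_eigenvalues_lt {A : Matrix ι ι ℝ} (hA : A.IsHermitian) {c : ℝ}
    (hc : ∀ (μ : ℝ) (z : ι → ℝ), z ≠ 0 → A *ᵥ z = μ • z → |μ| < c) (i : ι) :
    |hA.eigenvalues i| < c :=
  hc _ _ (by simpa using hA.eigenvectorBasis.orthonormal.ne_zero i) (hA.mulVec_eigenvectorBasis i)

theorem IsHermitian.hasSum_inv_pow_smul_pow_mulVec {A : Matrix ι ι ℝ} (hA : A.IsHermitian)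
    {lam : ℝ} (hlam : ∀ i, |hA.eigenvalues i| < |lam|) {v w : ι → ℝ}
    (hw : lam • w - A *ᵥ w = v) :
    HasSum (fun k : ℕ => (lam ^ (k + 1))⁻¹ • (A ^ (k + 1) *ᵥ v)) (A *ᵥ w) := by
  have hsum := hasSum_inv_pow_smul_conj_diagonal_pow hA.eigenvectorUnitary hlam
  have hmul := conj_diagonal_div_mul_smul_one_sub hA.eigenvectorUnitary
    (d := hA.eigenvalues) (lam := lam) fun i h => by simpa [h] using hlam i
  rw [← hA.eq_conj_diagonal] at hsum hmul
  convert hsum.map (mulVec.addMonoidHomLeft v) (continuous_id.matrix_mulVec continuous_const)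
    using 1
  · ext k : 1
    simp [mulVec.addMonoidHomLeft, smul_mulVec]
  · simp only [mulVec.addMonoidHomLeft, AddMonoidHom.coe_mk, ZeroHom.coe_mk]
    conv_lhs => rw [← hmul]
    rw [← hw, ← mulVec_mulVec, sub_mulVec, smul_mulVec, one_mulVec]

end Matrix

theorem adjMat_isHermitian_s12 {V : Type*} [Fintype V] (G : SimpleGraph V) :
    (adjMat G).IsHermitian := by
  ext v w
  simp [adjMat, G.adj_comm]

section DominatingVertex

variable {V : Type*} [Fintype V] {G : SimpleGraph V} {u0 : V} {α : V → ℝ} {lam : ℝ}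

theorem adjMat_mulVec_apply_of_ne (v : {v : V | v ≠ u0}) :
    (adjMat G *ᵥ α) v = (if G.Adj v u0 then α u0 else 0) +
      (adjMat (G.induce {v | v ≠ u0}) *ᵥ {v | v ≠ u0}.domRestrict α) v := by
  simp only [mulVec, dotProduct, adjMat, ite_mul, one_mul, zero_mul,
    Fintype.sum_eq_add_sum_subtype_ne _ u0]
  rfl

theorem adjMat_mulVec_apply_self (hu0 : ∀ v, v ≠ u0 → G.Adj u0 v) :
    (adjMat G *ᵥ α) u0 = ∑ v : {v : V | v ≠ u0}, α v := by
  simp only [mulVec, dotProduct, adjMat, Fintype.sum_eq_add_sum_subtype_ne _ u0,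
    SimpleGraph.irrefl, if_false, zero_mul, zero_add]
  exact Finset.sum_congr rfl fun v _ => by rw [if_pos (hu0 v v.2), one_mul]

theorem smul_domRestrict_sub_adjMat_induce_mulVec (hu0 : ∀ v, v ≠ u0 → G.Adj u0 v)
    (hα : α u0 = 1) (heig : adjMat G *ᵥ α = lam • α) :
    lam • {v | v ≠ u0}.domRestrict α -
      adjMat (G.induce {v | v ≠ u0}) *ᵥ {v | v ≠ u0}.domRestrict α = fun _ => 1 := by
  ext v
  have hv := congrFun heig v
  rw [adjMat_mulVec_apply_of_ne, if_pos (hu0 v v.2).symm, hα] at hv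
  simp only [Pi.sub_apply, Pi.smul_apply, smul_eq_mul, Set.domRestrict_apply] at hv ⊢
  linarith

theorem one_dotProduct_domRestrict (hu0 : ∀ v, v ≠ u0 → G.Adj u0 v) (hα : α u0 = 1)
    (heig : adjMat G *ᵥ α = lam • α) :
    (fun _ => 1) ⬝ᵥ {v | v ≠ u0}.domRestrict α = lam := by
  have h := congrFun heig u0
  rw [adjMat_mulVec_apply_self hu0, Pi.smul_apply, hα, smul_eq_mul, mul_one] at h
  simpa [dotProduct, Set.domRestrict] using h

end DominatingVertex

theorem eigenvalue_walk_series_general {V : Type} [Fintype V] (n : ℕ)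
    (G : SimpleGraph V) (hcard : Fintype.card V = n)
    (u0 : V) (hu0 : ∀ v : V, v ≠ u0 → G.Adj u0 v)
    (lam : ℝ) (α : V → ℝ) (hα : α u0 = 1)
    (heig : adjMat G *ᵥ α = lam • α)
    (hspec : ∀ (μ : ℝ) (z : {v : V | v ≠ u0} → ℝ), z ≠ 0 →
      adjMat (G.induce {v : V | v ≠ u0}) *ᵥ z = μ • z → |μ| < |lam|) :
    HasSum
      (fun k : ℕ => (lam ^ (k + 1))⁻¹ *
        ((fun _ => (1 : ℝ)) ⬝ᵥ
          ((adjMat (G.induce {v : V | v ≠ u0}) ^ (k + 1)) *ᵥ (fun _ => (1 : ℝ)))))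
      (lam ^ 2 - ((n : ℝ) - 1)) := by
  have hA := adjMat_isHermitian_s12 (G.induce {v : V | v ≠ u0})
  have hres := smul_domRestrict_sub_adjMat_induce_mulVec hu0 hα heig
  have hones : (fun _ => 1) ⬝ᵥ (fun _ => 1 : {v : V | v ≠ u0} → ℝ) = (n : ℝ) - 1 := by
    have hn : 1 ≤ n := hcard ▸ Fintype.card_pos_iff.mpr ⟨u0⟩
    rw [← Pi.one_def, one_dotProduct_one, Set.card_ne_eq, hcard, Nat.cast_sub hn, Nat.cast_one]
  have hval : (fun _ => 1) ⬝ᵥ (adjMat (G.induce {v : V | v ≠ u0}) *ᵥ {v | v ≠ u0}.domRestrict α) =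
      lam ^ 2 - ((n : ℝ) - 1) := by
    rw [← sub_sub_cancel (lam • _) (adjMat _ *ᵥ _), hres, dotProduct_sub, dotProduct_smul,
      one_dotProduct_domRestrict hu0 hα heig, hones, smul_eq_mul, sq]
  rw [← hval]
  convert (hA.hasSum_inv_pow_smul_pow_mulVec (hA.abs_eigenvalues_lt hspec) hres).map
    (dotProductBilin ℝ ℝ fun _ => (1 : ℝ)) (continuous_const.dotProduct continuous_id) using 1
  · ext k
    simp
  · simp

/-- The equation `λ² = (n−1) + Σ_{k≥1} λ^{−k} (1ᵀ A_H^k 1)` for an eigenvalue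
`λ` of `A(G)` with `|λ|` exceeding the spectral radius of `A_H`, where `H = G − u₀` and `u₀`
is a dominating vertex. -/
theorem eigenvalue_walk_series {V : Type} [Fintype V] (n : ℕ) (hn : 2 ≤ n)
    (G : SimpleGraph V) (hcard : Fintype.card V = n)
    (u0 : V) (hu0 : ∀ v : V, v ≠ u0 → G.Adj u0 v)
    (lam : ℝ) (α : V → ℝ) (hα : α u0 = 1)
    (heig : adjMat G *ᵥ α = lam • α)
    (hspec : ∀ (μ : ℝ) (z : {v : V | v ≠ u0} → ℝ), z ≠ 0 →
      adjMat (G.induce {v : V | v ≠ u0}) *ᵥ z = μ • z → |μ| < |lam|) :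
    HasSum
      (fun k : ℕ => (lam ^ (k + 1))⁻¹ *
        ((fun _ => (1 : ℝ)) ⬝ᵥ
          ((adjMat (G.induce {v : V | v ≠ u0}) ^ (k + 1)) *ᵥ (fun _ => (1 : ℝ)))))
      (lam ^ 2 - ((n : ℝ) - 1)) :=
  eigenvalue_walk_series_general n G hcard u0 hu0 lam α hα heig hspec
end

section
/- Let t ≥ 2 be an integer and let K be a connected (t−1)-regular graph such that the join K_1 ∨ K is K_{2,t}-minor-free. Then K is isomorphic to the complete graph K_t. -/
open Finset SimpleGraph Matrix

attribute [local instance] Classical.propDecidable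

/-!
If `K` is not complete, connectivity yields an induced path `x - a - b`. Two configurations give a
`K_{2,t}` minor of `K_1 ∨ K` at once: distinct vertices `p, q` with `N(p) ⊆ N(q)` (branch vertices
`p, q`, joined through the `t - 1` neighbours of `p` and the apex), and an edge `pq` with `t` further
neighbours (contract `pq` and use the apex as the second branch vertex). Excluding the second one
means that for every edge `ax` at most one neighbour of `a` lies outside `N[x]`; applied along the
path and to a neighbour `z` of `b` outside `N(x)` (which exists by the first one) this forces
`N(a) = {x, b}`. So `t = 3` and `K` is a cycle of length at least four, whose wheel `K_1 ∨ K`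
contains `K_{2,3}`: branch vertices `x` and `b`, joined through `a`, the apex, and the rest of the
cycle, which is connected by the handshake lemma.
-/

namespace SimpleGraph

section

variable {α β γ β' γ' U V W κ ι : Type*}

theorem IsMinorOf.of_embedding {H' : SimpleGraph U} {H : SimpleGraph W} {G : SimpleGraph V}
    (f : H' ↪g H) (h : H.IsMinorOf G) : H'.IsMinorOf G := by
  obtain ⟨φ, hne, hconn, hdisj, hadj⟩ := h
  exact ⟨φ ∘ f, fun _ => hne _, fun _ => hconn _, hdisj.comp_of_injective f.injective,
    fun _ _ h => hadj (f.map_adj_iff.mpr h)⟩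

def Embedding.completeBipartiteGraph (f : β' ↪ β) (g : γ' ↪ γ) :
    completeBipartiteGraph β' γ' ↪g completeBipartiteGraph β γ where
  toEmbedding := f.sumMap g
  map_rel_iff' := by simp

def Iso.completeBipartiteGraphSwap (β γ : Type*) :
    completeBipartiteGraph β γ ≃g completeBipartiteGraph γ β where
  toEquiv := Equiv.sumComm β γ
  map_rel_iff' := by rintro (_ | _) (_ | _) <;> simp

theorem IsMinorOf.completeBipartiteGraph_fin [Fintype β] [Fintype γ] {G : SimpleGraph V}
    {s t : ℕ} (h : (completeBipartiteGraph β γ).IsMinorOf G) (hs : s ≤ Fintype.card β)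
    (ht : t ≤ Fintype.card γ) : (completeBipartiteGraph (Fin s) (Fin t)).IsMinorOf G := by
  rw [← Fintype.card_fin s] at hs
  rw [← Fintype.card_fin t] at ht
  exact h.of_embedding <| Embedding.completeBipartiteGraph
    (Function.Embedding.nonempty_of_card_le hs).some (Function.Embedding.nonempty_of_card_le ht).some

theorem induce_singleton_connected (G : SimpleGraph V) (v : V) : (G.induce {v}).Connected := by
  rw [induce_singleton_eq_top]
  exact connected_top

theorem Connected.induce_image_inr {G : SimpleGraph α} {H : SimpleGraph β} {s : Set β}
    (h : (H.induce s).Connected) : ((gJoin G H).induce (Sum.inr '' s)).Connected :=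
  h.map ⟨fun b => ⟨Sum.inr b.1, b.1, b.2, rfl⟩, fun hab => hab⟩
    (by rintro ⟨_, b, hb, rfl⟩; exact ⟨⟨b, hb⟩, rfl⟩)

theorem Reachable.exists_connected_induce_subset {K : SimpleGraph W} {C : Set W} {u v : C}
    (h : (K.induce C).Reachable u v) : ∃ R ⊆ C, (K.induce R).Connected ∧ ↑u ∈ R ∧ ↑v ∈ R := by
  obtain ⟨p⟩ := h
  let q := p.map (Embedding.induce C).toHom
  refine ⟨{w | w ∈ q.support}, fun w hw => ?_, q.connected_induce_support, q.start_mem_support,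
    q.end_mem_support⟩
  obtain ⟨w', -, rfl⟩ := List.mem_map.mp ((p.support_map _).subst (motive := (w ∈ ·)) hw)
  exact w'.2

theorem Connected.exists_adj_adj_not_adj {K : SimpleGraph W} (hconn : K.Connected) (hK : K ≠ ⊤) :
    ∃ x a b, K.Adj x a ∧ K.Adj a b ∧ x ≠ b ∧ ¬K.Adj x b := by
  obtain ⟨x, y, hxy, hnxy⟩ : ∃ x y, x ≠ y ∧ ¬K.Adj x y := by
    simpa [eq_top_iff_forall_ne_adj] using hK
  by_contra! h
  have hclosed : ∀ w, Relation.ReflTransGen K.Adj x w → w = x ∨ K.Adj x w := fun w hw => by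
    induction hw with
    | refl => exact .inl rfl
    | @tail c d _ hcd ih =>
      rcases ih with rfl | hxc
      · exact .inr hcd
      · by_cases hxd : x = d
        exacts [.inl hxd.symm, .inr (h x c d hxc hcd hxd)]
  rcases hclosed y ((reachable_iff_reflTransGen x y).mp (hconn x y)) with rfl | h
  exacts [hxy rfl, hnxy h]

/-- The apex of the join is the branch set of `none`. -/
theorem isMinorOf_gJoin_of_branchSets [Nonempty α] {G : SimpleGraph α} {K : SimpleGraph W}
    (A : κ → Set W) (B : ι → Set W)
    (hA : ∀ k, (K.induce (A k)).Connected) (hB : ∀ i, (K.induce (B i)).Connected)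
    (hAA : Pairwise fun k l => Disjoint (A k) (A l))
    (hBB : Pairwise fun i j => Disjoint (B i) (B j))
    (hAB : ∀ k i, Disjoint (A k) (B i)) (hadj : ∀ k i, ∃ u ∈ A k, ∃ v ∈ B i, K.Adj u v) :
    (completeBipartiteGraph κ (Option ι)).IsMinorOf (gJoin G K) := by
  obtain ⟨a⟩ := ‹Nonempty α›
  have hAne k := Set.nonempty_coe_sort.mp (hA k).nonempty
  refine ⟨Sum.elim (fun k => Sum.inr '' A k)
    (fun o => o.elim {Sum.inl a} (fun i => Sum.inr '' B i)), ?_, ?_, ?_, ?_⟩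
  · rintro (k | _ | i)
    exacts [(hAne k).image _, Set.singleton_nonempty _,
      (Set.nonempty_coe_sort.mp (hB i).nonempty).image _]
  · rintro (k | _ | i)
    exacts [(hA k).induce_image_inr, induce_singleton_connected _ _, (hB i).induce_image_inr]
  · rintro (k | _ | i) (k' | _ | i') hne <;>
      simp only [ne_eq, Sum.inl.injEq, Sum.inr.injEq, Option.some.injEq, reduceCtorEq,
        not_false_eq_true, not_true_eq_false, Sum.elim_inl, Sum.elim_inr, Option.elim_none,
        Option.elim_some, Set.disjoint_image_iff Sum.inr_injective, Set.disjoint_singleton_left,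
        Set.disjoint_singleton_right, Set.mem_image, and_false, exists_false, hAB,
        (hAB _ _).symm] at hne ⊢
    exacts [hAA hne, hBB hne]
  · rintro (k | _ | i) (k' | _ | i') hadj' <;>
      simp only [completeBipartiteGraph_adj, Sum.isLeft_inl, Sum.isLeft_inr, Sum.isRight_inl,
        Sum.isRight_inr, Bool.false_eq_true, and_self, and_true, and_false, or_true, or_false,
        or_self, SimpleGraph.irrefl, Sum.elim_inl, Sum.elim_inr, Option.elim_none, Option.elim_some,
        Set.mem_image, Set.mem_singleton_iff, exists_eq_left, exists_exists_and_eq_and] at hadj' ⊢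
    · exact (hAne k).imp fun _ hu => ⟨hu, trivial⟩
    · exact hadj k i'
    · exact (hAne k').imp fun _ hu => ⟨hu, trivial⟩
    · obtain ⟨u, hu, v, hv, huv⟩ := hadj k' i
      exact ⟨v, hv, u, hu, huv.symm⟩

end

variable {α W : Type*} [Fintype W] {G : SimpleGraph α} {K : SimpleGraph W}

theorem isMinorOf_gJoin_of_neighborFinset_subset [Nonempty α] {p q : W} (hpq : p ≠ q)
    (h : K.neighborFinset p ⊆ K.neighborFinset q) :
    (completeBipartiteGraph (Fin 2) (Fin (K.degree p + 1))).IsMinorOf (gJoin G K) := by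
  have hq : ∀ v ∈ K.neighborFinset p, K.Adj q v := fun v hv => (mem_neighborFinset ..).mp (h hv)
  refine (isMinorOf_gJoin_of_branchSets (G := G) (fun x : ({p, q} : Finset W) => {x.1})
    (fun v : K.neighborFinset p => {v.1}) (fun _ => induce_singleton_connected _ _)
    (fun _ => induce_singleton_connected _ _)
    (fun _ _ h => Set.disjoint_singleton.mpr (Subtype.coe_injective.ne h))
    (fun _ _ h => Set.disjoint_singleton.mpr (Subtype.coe_injective.ne h)) ?_ ?_
    ).completeBipartiteGraph_fin ?_ ?_
  · rintro ⟨x, hx⟩ ⟨v, hv⟩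
    simp only [mem_insert, mem_singleton] at hx
    rcases hx with rfl | rfl
    · simpa using ((mem_neighborFinset ..).mp hv).ne
    · simpa using (hq v hv).ne
  · rintro ⟨x, hx⟩ ⟨v, hv⟩
    simp only [mem_insert, mem_singleton] at hx
    rcases hx with rfl | rfl
    · simpa using (mem_neighborFinset ..).mp hv
    · simpa using hq v hv
  · rw [Fintype.card_coe, card_pair hpq]
  · rw [Fintype.card_option, Fintype.card_coe, card_neighborFinset_eq_degree]

theorem isMinorOf_gJoin_of_adj [Nonempty α] {p q : W} (hpq : K.Adj p q) :
    (completeBipartiteGraph (Fin 2)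
      (Fin #((K.neighborFinset p ∪ K.neighborFinset q) \ {p, q}))).IsMinorOf (gJoin G K) := by
  refine ((isMinorOf_gJoin_of_branchSets (G := G)
    (fun v : ((K.neighborFinset p ∪ K.neighborFinset q) \ {p, q} : Finset W) => {v.1})
    (fun _ : Unit => {p, q}) (fun _ => induce_singleton_connected _ _)
    (fun _ => induce_pair_connected_of_adj hpq)
    (fun _ _ h => Set.disjoint_singleton.mpr (Subtype.coe_injective.ne h))
    (fun _ _ h => absurd rfl h) ?_ ?_).of_embedding
    (Iso.completeBipartiteGraphSwap _ _).toEmbedding).completeBipartiteGraph_fin (by simp)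
    (by rw [Fintype.card_coe])
  · rintro ⟨v, hv⟩ -
    simp only [mem_sdiff, mem_insert, mem_singleton, not_or] at hv
    simpa using hv.2
  · rintro ⟨v, hv⟩ -
    simp only [mem_sdiff, mem_union, mem_neighborFinset] at hv
    rcases hv.1 with h | h
    · exact ⟨v, rfl, p, by simp, h.symm⟩
    · exact ⟨v, rfl, q, by simp, h.symm⟩

theorem neighborFinset_eq_pair_of_degree_eq_two {c d e : W} (h : K.degree c = 2)
    (hd : K.Adj c d) (he : K.Adj c e) (hde : d ≠ e) : K.neighborFinset c = {d, e} := by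
  refine (eq_of_subset_of_card_le ?_ ?_).symm
  · intro w
    simp only [mem_insert, mem_singleton, mem_neighborFinset]
    rintro (rfl | rfl) <;> assumption
  · rw [card_neighborFinset_eq_degree, h, card_pair hde]

theorem exists_adj_ne_of_two_le_degree {c : W} (h : 2 ≤ K.degree c) (d : W) :
    ∃ e, K.Adj c e ∧ e ≠ d := by
  obtain ⟨e, he⟩ : ((K.neighborFinset c).erase d).Nonempty := by
    rw [← card_pos]
    have := pred_card_le_card_erase (s := K.neighborFinset c) (a := d)
    rw [card_neighborFinset_eq_degree] at this
    omega
  rw [mem_erase, mem_neighborFinset] at he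
  exact ⟨e, he.2, he.1⟩

theorem even_sum_card_neighborFinset_inter (D : Finset W) :
    Even (∑ v ∈ D, #(K.neighborFinset v ∩ D)) := by
  have hdeg : ∀ v : (D : Set W), (K.induce (D : Set W)).degree v = #(K.neighborFinset v ∩ D) :=
    fun v => by
      have := congrArg Finset.card (K.map_neighborFinset_induce (s := (D : Set W)) v)
      rw [card_map, toFinset_coe, card_neighborFinset_eq_degree] at this
      convert this
  have := (K.induce (D : Set W)).sum_degrees_eq_twice_card_edges
  simp only [hdeg] at this
  rw [← Finset.sum_coe_sort D]
  exact ⟨_, this.trans (two_mul _)⟩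

theorem even_sum_card_neighborFinset_sdiff (h : ∀ v, Even (K.degree v)) (D : Finset W) :
    Even (∑ v ∈ D, #(K.neighborFinset v \ D)) := by
  have hsplit : ∑ v ∈ D, #(K.neighborFinset v ∩ D) + ∑ v ∈ D, #(K.neighborFinset v \ D) =
      ∑ v ∈ D, K.degree v := by
    rw [← sum_add_distrib]
    exact sum_congr rfl fun v _ => by rw [card_inter_add_card_sdiff, card_neighborFinset_eq_degree]
  have := hsplit ▸ Finset.even_sum _ fun v _ => h v
  exact (Nat.even_add.mp this).mp (even_sum_card_neighborFinset_inter D)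

theorem exists_adj_notMem_ne_of_even_degree (h : ∀ v, Even (K.degree v)) {D : Finset W}
    {v x : W} (hv : v ∈ D) (hx : x ∉ D) (hvx : K.Adj v x) :
    ∃ w ∈ D, ∃ y ∉ D, K.Adj w y ∧ (w ≠ v ∨ y ≠ x) := by
  by_contra! hD
  have hsum : ∑ w ∈ D, #(K.neighborFinset w \ D) = 1 := by
    rw [sum_eq_single_of_mem v hv fun w hw hwv => card_eq_zero.mpr <| eq_empty_of_forall_notMem
      fun y hy => hwv (hD w hw y (mem_sdiff.mp hy).2 ((mem_neighborFinset ..).mp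
        (mem_sdiff.mp hy).1)).1]
    refine card_eq_one.mpr ⟨x, eq_singleton_iff_unique_mem.mpr ⟨?_, fun y hy => ?_⟩⟩
    · exact mem_sdiff.mpr ⟨(mem_neighborFinset ..).mpr hvx, hx⟩
    · exact (hD v hv y (mem_sdiff.mp hy).2 ((mem_neighborFinset ..).mp (mem_sdiff.mp hy).1)).2
  have := even_sum_card_neighborFinset_sdiff h D
  rw [hsum] at this
  exact Nat.not_even_one this

theorem reachable_induce_compl_of_isRegularOfDegree_two (hreg : K.IsRegularOfDegree 2)
    {x a b v z : W} (hNx : K.neighborFinset x = {a, v}) (hNa : K.neighborFinset a = {x, b})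
    (hNb : K.neighborFinset b = {a, z}) (hv : v ∈ ({x, a, b} : Set W)ᶜ)
    (hz : z ∈ ({x, a, b} : Set W)ᶜ) :
    (K.induce ({x, a, b} : Set W)ᶜ).Reachable ⟨v, hv⟩ ⟨z, hz⟩ := by
  set C : Set W := ({x, a, b} : Set W)ᶜ
  by_contra hvz
  -- otherwise the edge `vx` is the only one leaving the component `D` of `v` in `C`
  let D : Finset W := univ.filter fun w => ∃ hw : w ∈ C, (K.induce C).Reachable ⟨v, hv⟩ ⟨w, hw⟩
  have hD : ∀ {w}, w ∈ D ↔ ∃ hw : w ∈ C, (K.induce C).Reachable ⟨v, hv⟩ ⟨w, hw⟩ := by simp [D]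
  obtain ⟨w, hw, y, hy, hwy, hne⟩ := exists_adj_notMem_ne_of_even_degree
    (fun w => hreg.degree_eq w ▸ even_two) (hD.mpr ⟨hv, .rfl⟩) (fun h => (hD.mp h).1 (by simp))
    ((mem_neighborFinset ..).mp (by simp [hNx]) : K.Adj x v).symm
  obtain ⟨hwC, hr⟩ := hD.mp hw
  have hyC : y ∈ ({x, a, b} : Set W) := by
    by_contra hyC
    exact hy (hD.mpr ⟨hyC, hr.trans (Adj.reachable (by simpa using hwy))⟩)
  have hwz : w ≠ z := by rintro rfl; exact hvz hr
  have hwy' := (mem_neighborFinset ..).mpr hwy.symm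
  simp only [C, Set.mem_compl_iff, Set.mem_insert_iff, Set.mem_singleton_iff, not_or] at hyC hwC
  rcases hyC with rfl | rfl | rfl <;>
    simp only [hNx, hNa, hNb, mem_insert, mem_singleton] at hwy' <;> tauto

theorem isMinorOf_gJoin_of_isRegularOfDegree_two [Nonempty α] (hreg : K.IsRegularOfDegree 2)
    {x a b : W} (hxa : K.Adj x a) (hab : K.Adj a b) (hxb : x ≠ b) (hnxb : ¬K.Adj x b) :
    (completeBipartiteGraph (Fin 2) (Fin 3)).IsMinorOf (gJoin G K) := by
  obtain ⟨v, hxv, hva⟩ := exists_adj_ne_of_two_le_degree (hreg.degree_eq x).ge a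
  obtain ⟨z, hbz, hza⟩ := exists_adj_ne_of_two_le_degree (hreg.degree_eq b).ge a
  have hv : v ∈ ({x, a, b} : Set W)ᶜ := by
    simp only [Set.mem_compl_iff, Set.mem_insert_iff, Set.mem_singleton_iff, not_or]
    exact ⟨hxv.ne', hva, by rintro rfl; exact hnxb hxv⟩
  have hz : z ∈ ({x, a, b} : Set W)ᶜ := by
    simp only [Set.mem_compl_iff, Set.mem_insert_iff, Set.mem_singleton_iff, not_or]
    exact ⟨by rintro rfl; exact hnxb hbz.symm, hza, hbz.ne'⟩
  obtain ⟨R, hRC, hR, hvR, hzR⟩ := (reachable_induce_compl_of_isRegularOfDegree_two hreg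
    (neighborFinset_eq_pair_of_degree_eq_two (hreg.degree_eq x) hxa hxv hva.symm)
    (neighborFinset_eq_pair_of_degree_eq_two (hreg.degree_eq a) hxa.symm hab hxb)
    (neighborFinset_eq_pair_of_degree_eq_two (hreg.degree_eq b) hab.symm hbz hza.symm)
    hv hz).exists_connected_induce_subset
  have hxR : x ∉ R := fun h => hRC h (by simp)
  have haR : a ∉ R := fun h => hRC h (by simp)
  have hbR : b ∉ R := fun h => hRC h (by simp)
  refine (isMinorOf_gJoin_of_branchSets (G := G) (fun c : ({x, b} : Finset W) => {c.1}) ![{a}, R]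
    (fun _ => induce_singleton_connected _ _)
    (Fin.forall_fin_two.mpr ⟨induce_singleton_connected _ _, hR⟩)
    (fun _ _ h => Set.disjoint_singleton.mpr (Subtype.coe_injective.ne h)) ?_ ?_ ?_
    ).completeBipartiteGraph_fin (by rw [Fintype.card_coe, card_pair hxb]) (by simp)
  · intro i j hij
    fin_cases i <;> fin_cases j <;> simp_all
  · rintro ⟨c, hc⟩ i
    simp only [mem_insert, mem_singleton] at hc
    fin_cases i <;> rcases hc with rfl | rfl <;> simp [hxa.ne, hab.ne', *]
  · rintro ⟨c, hc⟩ i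
    simp only [mem_insert, mem_singleton] at hc
    fin_cases i <;> rcases hc with rfl | rfl
    exacts [⟨_, rfl, a, rfl, hxa⟩, ⟨_, rfl, a, rfl, hab.symm⟩, ⟨_, rfl, v, hvR, hxv⟩,
      ⟨_, rfl, z, hzR, hbz⟩]

end SimpleGraph

namespace K2tMinorFree

variable {α W : Type*} [Nonempty α] [Fintype W] {G : SimpleGraph α} {K : SimpleGraph W} {t : ℕ}

theorem not_neighborFinset_subset (hfree : K2tMinorFree t (gJoin G K))
    (hreg : K.IsRegularOfDegree (t - 1)) {p q : W} (hpq : p ≠ q) :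
    ¬K.neighborFinset p ⊆ K.neighborFinset q := fun h =>
  hfree <| (isMinorOf_gJoin_of_neighborFinset_subset hpq h).completeBipartiteGraph_fin
    (by simp) (by simp only [hreg.degree_eq, Fintype.card_fin]; omega)

theorem card_neighborFinset_sdiff_le_one (hfree : K2tMinorFree t (gJoin G K))
    (hreg : K.IsRegularOfDegree (t - 1)) {a x : W} (hax : K.Adj a x) :
    #(K.neighborFinset a \ insert x (K.neighborFinset x)) ≤ 1 := by
  have hU : #((K.neighborFinset a ∪ K.neighborFinset x) \ {a, x}) < t := by
    by_contra! h
    exact hfree <| (isMinorOf_gJoin_of_adj hax).completeBipartiteGraph_fin (by simp) (by simpa)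
  have hsub : (K.neighborFinset x).erase a ∪ (K.neighborFinset a \ insert x (K.neighborFinset x)) ⊆
      (K.neighborFinset a ∪ K.neighborFinset x) \ {a, x} := by
    intro v
    simp only [mem_union, mem_erase, mem_sdiff, mem_insert, mem_singleton, mem_neighborFinset]
    rintro (⟨hva, hxv⟩ | ⟨hav, hvx⟩)
    · simp_all [hxv.ne']
    · simp_all [hav.ne']
  have hdisj : Disjoint ((K.neighborFinset x).erase a)
      (K.neighborFinset a \ insert x (K.neighborFinset x)) :=
    disjoint_left.mpr fun v hv hv' => (mem_sdiff.mp hv').2 (mem_insert_of_mem (mem_of_mem_erase hv))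
  have hpos : 0 < t - 1 := hreg.degree_eq x ▸ (K.degree_pos_iff_exists_adj x).mpr ⟨a, hax.symm⟩
  have := card_le_card hsub
  rw [card_union_of_disjoint hdisj, card_erase_of_mem ((mem_neighborFinset ..).mpr hax.symm),
    card_neighborFinset_eq_degree, hreg.degree_eq] at this
  omega

theorem eq_of_not_adj (hfree : K2tMinorFree t (gJoin G K)) (hreg : K.IsRegularOfDegree (t - 1))
    {c d e f : W} (hcd : K.Adj c d) (hce : K.Adj c e) (hcf : K.Adj c f)
    (hed : e ≠ d) (hfd : f ≠ d) (hde : ¬K.Adj d e) (hdf : ¬K.Adj d f) : e = f :=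
  card_le_one.mp (hfree.card_neighborFinset_sdiff_le_one hreg hcd) e (by simp [*]) f (by simp [*])

theorem neighborFinset_eq_pair (hfree : K2tMinorFree t (gJoin G K))
    (hreg : K.IsRegularOfDegree (t - 1)) {x a b : W} (hxa : K.Adj x a) (hab : K.Adj a b)
    (hxb : x ≠ b) (hnxb : ¬K.Adj x b) : K.neighborFinset a = {x, b} := by
  have hS : ∀ s, K.Adj a s → s ≠ x → s ≠ b → K.Adj x s ∧ K.Adj b s := fun s has hsx hsb =>
    ⟨by_contra fun h => hsb (hfree.eq_of_not_adj hreg hxa.symm hab has hxb.symm hsx hnxb h).symm,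
     by_contra fun h => hsx (hfree.eq_of_not_adj hreg hab hxa.symm has hxb hsb
       (fun h' => hnxb h'.symm) h).symm⟩
  obtain ⟨z, hbz, hxz⟩ := not_subset.mp (hfree.not_neighborFinset_subset hreg hxb.symm)
  rw [mem_neighborFinset] at hbz hxz
  have hzx : z ≠ x := by rintro rfl; exact hnxb hbz.symm
  have haz : ¬K.Adj a z := fun h => hxz (hS z h hzx hbz.ne').1
  ext s
  simp only [mem_neighborFinset, mem_insert, mem_singleton]
  refine ⟨fun has => ?_, by rintro (rfl | rfl); exacts [hxa.symm, hab]⟩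
  by_contra! hs
  -- such an `s` would be adjacent to `x`, `b` and `z`, with `b ≠ z` both outside `N[x]`
  obtain ⟨hxs, hbs⟩ := hS s has hs.1 hs.2
  have hzs : K.Adj z s := by_contra fun h => has.ne
    (hfree.eq_of_not_adj hreg hbz hab.symm hbs (fun h => hxz (h ▸ hxa))
      (by rintro rfl; exact hxz hxs) (fun h' => haz h'.symm) h)
  exact hbz.ne (hfree.eq_of_not_adj hreg hxs.symm hbs.symm hzs.symm hxb.symm hzx hnxb hxz)

end K2tMinorFree

/-- A connected `(t−1)`-regular graph `K` such that `K_1 ∨ K` is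
`K_{2,t}`-minor-free must be the complete graph `K_t`. -/
theorem regular_component_is_clique (t : ℕ) (ht : 2 ≤ t) (W : Type) [Fintype W]
    (K : SimpleGraph W) (hconn : K.Connected) (hreg : ∀ v : W, K.degree v = t - 1)
    (hfree : K2tMinorFree t (gJoin (⊤ : SimpleGraph (Fin 1)) K)) :
    Nonempty (K ≃g (⊤ : SimpleGraph (Fin t))) := by
  by_cases hK : K = ⊤
  · subst hK
    obtain ⟨v⟩ := hconn.nonempty
    have hcard : Fintype.card W = t := by
      have h : Fintype.card W - 1 = t - 1 := by
        rw [← hreg v]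
        convert (complete_graph_degree v).symm
      have := Fintype.card_pos_iff.mpr ⟨v⟩
      omega
    exact ⟨Iso.completeGraph (Fintype.equivFinOfCardEq hcard)⟩
  obtain ⟨x, a, b, hxa, hab, hxb, hnxb⟩ := hconn.exists_adj_adj_not_adj hK
  have hdeg : t - 1 = 2 := by
    rw [← hreg a, ← card_neighborFinset_eq_degree,
      hfree.neighborFinset_eq_pair hreg hxa hab hxb hnxb, card_pair hxb]
  exact absurd ((isMinorOf_gJoin_of_isRegularOfDegree_two (fun v => (hreg v).trans hdeg) hxa hab
    hxb hnxb).completeBipartiteGraph_fin le_rfl (by simp only [Fintype.card_fin]; omega)) hfree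
end

section
/- For every integer t ≥ 2 there exists N such that for all integers ℓ ≥ 0 and n ≥ N with ℓt ≤ n−1, the graph G_ℓ = K_1 ∨ (ℓ·K_t ∪ (n−1−ℓt)·P_1) satisfies: both λ_max(A(G_ℓ)) and λ_min(A(G_ℓ)) are roots of the cubic equation λ³ − (t−1)λ² − (n−1)λ + (t−1)(n−1−ℓt) = 0. -/
open Finset SimpleGraph Matrix

attribute [local instance] Classical.propDecidable

/-!
Write `m = n - 1 - ℓt` and `p(x) = x³ - (t-1)x² - (ℓt+m)x + (t-1)m`. An eigenvector of
`K_1 ∨ (ℓK_t ∪ mP_1)` for an eigenvalue `μ ∉ {0, -1, t-1}` is constant on each clique, where it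
equals `z_apex / (μ-(t-1))`, and on the isolated vertices, where it equals `z_apex / μ`; the apex
row then says `p(μ) = 0`. Conversely these formulas give an eigenvector for every root of `p`
other than `0` and `t-1`. Since `p(x) = (x-(t-1))(x² - (ℓt+m)) - (t-1)ℓt`, the intermediate value
theorem yields roots of `p` above `t-1` and below `-1` once `n` is large, so `λ_max > t-1` and
`λ_min < -1` avoid the exceptional values and are roots of `p`.
-/

section Spectrum

variable {V : Type*} [Fintype V]

def adjSpectrum (G : SimpleGraph V) : Set ℝ :=
  {μ | ∃ z : V → ℝ, z ≠ 0 ∧ adjMat G *ᵥ z = μ • z}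

lemma adjSpectrum_finite (G : SimpleGraph V) : (adjSpectrum G).Finite :=
  (Module.End.finite_hasEigenvalue (toLin' (adjMat G))).subset fun _ ⟨z, hz, hGz⟩ =>
    Module.End.hasEigenvalue_of_hasEigenvector
      ⟨Module.End.mem_eigenspace_iff.2 (by simpa using hGz), hz⟩

lemma lamMax_mem_adjSpectrum {G : SimpleGraph V} (h : (adjSpectrum G).Nonempty) :
    lamMax G ∈ adjSpectrum G :=
  h.csSup_mem (adjSpectrum_finite G)

lemma lamMin_mem_adjSpectrum {G : SimpleGraph V} (h : (adjSpectrum G).Nonempty) :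
    lamMin G ∈ adjSpectrum G :=
  h.csInf_mem (adjSpectrum_finite G)

lemma le_lamMax {G : SimpleGraph V} {μ : ℝ} (hμ : μ ∈ adjSpectrum G) : μ ≤ lamMax G :=
  le_csSup (adjSpectrum_finite G).bddAbove hμ

lemma lamMin_le {G : SimpleGraph V} {μ : ℝ} (hμ : μ ∈ adjSpectrum G) : lamMin G ≤ μ :=
  csInf_le (adjSpectrum_finite G).bddBelow hμ

end Spectrum

section Extremal

variable {t ℓ m : ℕ}

lemma GExt_mulVec_apex (z : Fin 1 ⊕ ((Fin ℓ × Fin t) ⊕ Fin m) → ℝ) :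
    (adjMat (GExt t ℓ m) *ᵥ z) (Sum.inl 0) =
      (∑ p, z (Sum.inr (Sum.inl p))) + ∑ k, z (Sum.inr (Sum.inr k)) := by
  simp [mulVec, dotProduct, Fintype.sum_sum_type, adjMat, GExt, gJoin, gSum]

lemma GExt_mulVec_clique (z : Fin 1 ⊕ ((Fin ℓ × Fin t) ⊕ Fin m) → ℝ) (i : Fin ℓ) (j : Fin t) :
    (adjMat (GExt t ℓ m) *ᵥ z) (Sum.inr (Sum.inl (i, j))) =
      z (Sum.inl 0) + ((∑ j', z (Sum.inr (Sum.inl (i, j')))) - z (Sum.inr (Sum.inl (i, j)))) := by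
  simp only [mulVec, dotProduct, Fintype.sum_sum_type, Fintype.sum_prod_type]
  simp only [univ_unique, Fin.default_eq_zero, Fin.isValue, adjMat, GExt, gJoin, top_adj, ne_eq,
    gSum, cliques, bot_adj, ↓reduceIte, one_mul, sum_singleton, ite_and, ite_not, ite_mul, zero_mul, sum_ite_irrel,
    sum_const_zero, sum_ite_eq, mem_univ, add_zero, add_right_inj]
  rw [Finset.sum_ite, Finset.sum_const_zero, zero_add, Finset.filter_ne,
    Finset.sum_erase_eq_sub (Finset.mem_univ j)]

lemma GExt_mulVec_isolated (z : Fin 1 ⊕ ((Fin ℓ × Fin t) ⊕ Fin m) → ℝ) (k : Fin m) :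
    (adjMat (GExt t ℓ m) *ᵥ z) (Sum.inr (Sum.inr k)) = z (Sum.inl 0) := by
  simp [mulVec, dotProduct, Fintype.sum_sum_type, adjMat, GExt, gJoin, gSum]

variable {μ : ℝ} {z : Fin 1 ⊕ ((Fin ℓ × Fin t) ⊕ Fin m) → ℝ}

lemma GExt_eigenvector_clique (hz : adjMat (GExt t ℓ m) *ᵥ z = μ • z) (hμ : μ ≠ -1)
    (i : Fin ℓ) (j : Fin t) :
    (μ - ((t : ℝ) - 1)) * z (Sum.inr (Sum.inl (i, j))) = z (Sum.inl 0) := by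
  have row : ∀ j, z (Sum.inl 0) + ((∑ j', z (Sum.inr (Sum.inl (i, j')))) -
      z (Sum.inr (Sum.inl (i, j)))) = μ * z (Sum.inr (Sum.inl (i, j))) := fun j => by
    simpa [GExt_mulVec_clique] using congrFun hz (Sum.inr (Sum.inl (i, j)))
  -- each row says `(μ + 1) z_{ij} = z_apex + ∑ z_{ij'}`, which does not depend on `j`
  have hconst : ∀ j', z (Sum.inr (Sum.inl (i, j'))) = z (Sum.inr (Sum.inl (i, j))) := fun j' =>
    mul_left_cancel₀ (sub_ne_zero.2 hμ : μ - -1 ≠ 0) (by linarith [row j, row j'])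
  have hsum : ∑ j', z (Sum.inr (Sum.inl (i, j'))) = t * z (Sum.inr (Sum.inl (i, j))) := by
    simp [hconst]
  linarith [row j]

lemma GExt_eigenvector_isolated (hz : adjMat (GExt t ℓ m) *ᵥ z = μ • z) (k : Fin m) :
    μ * z (Sum.inr (Sum.inr k)) = z (Sum.inl 0) := by
  simpa [GExt_mulVec_isolated] using (congrFun hz (Sum.inr (Sum.inr k))).symm

lemma GExt_eigenvector_apex (hz : adjMat (GExt t ℓ m) *ᵥ z = μ • z) :
    (∑ p, z (Sum.inr (Sum.inl p))) + ∑ k, z (Sum.inr (Sum.inr k)) = μ * z (Sum.inl 0) := by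
  simpa [GExt_mulVec_apex] using congrFun hz (Sum.inl 0)

def extCubic (t ℓ m : ℕ) (x : ℝ) : ℝ :=
  x ^ 3 - ((t : ℝ) - 1) * x ^ 2 - ((ℓ : ℝ) * t + m) * x + ((t : ℝ) - 1) * m

lemma extCubic_eq_zero_of_mem_adjSpectrum (hμ : μ ∈ adjSpectrum (GExt t ℓ m)) (h0 : μ ≠ 0)
    (h1 : μ ≠ -1) (h2 : μ ≠ (t : ℝ) - 1) : extCubic t ℓ m μ = 0 := by
  obtain ⟨z, hz0, hz⟩ := hμ
  have h2' : μ - ((t : ℝ) - 1) ≠ 0 := sub_ne_zero.2 h2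
  have hclique := GExt_eigenvector_clique hz h1
  have hiso := GExt_eigenvector_isolated hz
  have hapex : z (Sum.inl 0) ≠ 0 := by
    intro ha
    refine hz0 (funext ?_)
    rintro (a | ⟨i, j⟩ | k)
    · rw [Subsingleton.elim a 0, ha, Pi.zero_apply]
    · exact (mul_eq_zero.1 ((hclique i j).trans ha)).resolve_left h2'
    · exact (mul_eq_zero.1 ((hiso k).trans ha)).resolve_left h0
  have hsc : (μ - ((t : ℝ) - 1)) * ∑ p, z (Sum.inr (Sum.inl p)) = ℓ * t * z (Sum.inl 0) := by
    simp [Finset.mul_sum, hclique, mul_assoc]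
  have hsk : μ * ∑ k, z (Sum.inr (Sum.inr k)) = m * z (Sum.inl 0) := by
    simp [Finset.mul_sum, hiso]
  refine (mul_eq_zero.1 (?_ : z (Sum.inl 0) * extCubic t ℓ m μ = 0)).resolve_left hapex
  unfold extCubic
  linear_combination μ * hsc + (μ - ((t : ℝ) - 1)) * hsk
    - μ * (μ - ((t : ℝ) - 1)) * GExt_eigenvector_apex hz

lemma mem_adjSpectrum_GExt_of_extCubic_eq_zero (hμ : extCubic t ℓ m μ = 0) (h0 : μ ≠ 0)
    (h2 : μ ≠ (t : ℝ) - 1) : μ ∈ adjSpectrum (GExt t ℓ m) := by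
  set c := μ - ((t : ℝ) - 1)
  refine ⟨Sum.elim (fun _ => μ * c) (Sum.elim (fun _ => μ) (fun _ => c)), fun h => ?_, ?_⟩
  · exact mul_ne_zero h0 (sub_ne_zero.2 h2) (congrFun h (Sum.inl 0))
  · funext v
    rcases v with a | ⟨i, j⟩ | k
    · rw [Subsingleton.elim a 0, GExt_mulVec_apex]
      simp only [Sum.elim_inl, Sum.elim_inr, Finset.sum_const, Finset.card_univ,
        Fintype.card_prod, Fintype.card_fin, nsmul_eq_mul, Pi.smul_apply, smul_eq_mul]
      unfold extCubic at hμ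
      push_cast
      linear_combination -hμ
    · rw [GExt_mulVec_clique]
      simp only [Sum.elim_inl, Sum.elim_inr, Finset.sum_const, Finset.card_univ,
        Fintype.card_fin, nsmul_eq_mul, Pi.smul_apply, smul_eq_mul]
      ring
    · rw [GExt_mulVec_isolated]
      simp only [Sum.elim_inl, Sum.elim_inr, Pi.smul_apply, smul_eq_mul]

lemma extCubic_eq (x : ℝ) : extCubic t ℓ m x =
    (x - ((t : ℝ) - 1)) * (x ^ 2 - ((ℓ : ℝ) * t + m)) - ((t : ℝ) - 1) * ℓ * t := by
  unfold extCubic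
  ring

lemma continuous_extCubic : Continuous (extCubic t ℓ m) := by
  unfold extCubic
  fun_prop

lemma exists_extCubic_eq_zero_gt (ht : 1 ≤ t) (h : ((t : ℝ) - 1) ^ 2 < ℓ * t + m) :
    ∃ μ, extCubic t ℓ m μ = 0 ∧ (t : ℝ) - 1 < μ := by
  set s : ℝ := ℓ * t + m
  have htR : (1 : ℝ) ≤ t := by exact_mod_cast ht
  have hs : √s ^ 2 = s := Real.sq_sqrt (by positivity)
  have hlt : (t : ℝ) - 1 < √s := (Real.lt_sqrt (by linarith)).2 h
  have hle : √s ≤ s + t := by nlinarith [sq_nonneg (√s - 1)]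
  have hlow : extCubic t ℓ m √s ≤ 0 := by
    rw [extCubic_eq, hs, sub_self, mul_zero, zero_sub, neg_nonpos]
    positivity
  have hhigh : 0 ≤ extCubic t ℓ m (s + t) := by
    rw [extCubic_eq]
    have hℓt : (ℓ : ℝ) * t ≤ s := le_add_of_nonneg_right m.cast_nonneg
    have : ((t : ℝ) - 1) * ℓ * t ≤ (s + t) ^ 2 - s := by
      nlinarith [mul_le_mul_of_nonneg_left hℓt (by linarith : (0 : ℝ) ≤ t - 1)]
    nlinarith
  obtain ⟨μ, hμ, hμ0⟩ :=
    intermediate_value_Icc hle continuous_extCubic.continuousOn ⟨hlow, hhigh⟩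
  exact ⟨μ, hμ0, hlt.trans_le hμ.1⟩

lemma exists_extCubic_eq_zero_lt (ht : 1 ≤ t) (h : 2 ≤ ℓ + m) :
    ∃ μ, extCubic t ℓ m μ = 0 ∧ μ < -1 := by
  set s : ℝ := ℓ * t + m
  have htR : (1 : ℝ) ≤ t := by exact_mod_cast ht
  have hℓm : (2 : ℝ) ≤ ℓ + m := by exact_mod_cast h
  have hs1 : 1 ≤ s := by nlinarith [Nat.cast_nonneg (α := ℝ) ℓ]
  have hs : √s ^ 2 = s := Real.sq_sqrt (by positivity)
  have hle : -√s ≤ -1 := neg_le_neg (Real.one_le_sqrt.2 hs1)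
  have hlow : extCubic t ℓ m (-√s) ≤ 0 := by
    rw [extCubic_eq, neg_sq, hs, sub_self, mul_zero, zero_sub, neg_nonpos]
    positivity
  -- `p(-1) = t (ℓ + m - 1)`
  have hhigh : 0 < extCubic t ℓ m (-1) := by
    unfold extCubic
    nlinarith
  obtain ⟨μ, hμ, hμ0⟩ :=
    intermediate_value_Icc hle continuous_extCubic.continuousOn ⟨hlow, hhigh.le⟩
  exact ⟨μ, hμ0, hμ.2.lt_of_ne (by rintro rfl; exact hhigh.ne' hμ0)⟩

lemma extCubic_lamMax_eq_zero (ht : 1 ≤ t) (h : ((t : ℝ) - 1) ^ 2 < ℓ * t + m) :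
    extCubic t ℓ m (lamMax (GExt t ℓ m)) = 0 := by
  have htR : (1 : ℝ) ≤ t := by exact_mod_cast ht
  obtain ⟨μ, hμ0, hμt⟩ := exists_extCubic_eq_zero_gt ht h
  have hμ : μ ∈ adjSpectrum (GExt t ℓ m) :=
    mem_adjSpectrum_GExt_of_extCubic_eq_zero hμ0 (by linarith) hμt.ne'
  have hmax : (t : ℝ) - 1 < lamMax (GExt t ℓ m) := hμt.trans_le (le_lamMax hμ)
  exact extCubic_eq_zero_of_mem_adjSpectrum (lamMax_mem_adjSpectrum ⟨μ, hμ⟩)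
    (by linarith) (by linarith) hmax.ne'

lemma extCubic_lamMin_eq_zero (ht : 1 ≤ t) (h : 2 ≤ ℓ + m) :
    extCubic t ℓ m (lamMin (GExt t ℓ m)) = 0 := by
  have htR : (1 : ℝ) ≤ t := by exact_mod_cast ht
  obtain ⟨μ, hμ0, hμt⟩ := exists_extCubic_eq_zero_lt ht h
  have hμ : μ ∈ adjSpectrum (GExt t ℓ m) :=
    mem_adjSpectrum_GExt_of_extCubic_eq_zero hμ0 (by linarith) (by linarith)
  have hmin : lamMin (GExt t ℓ m) < -1 := (lamMin_le hμ).trans_lt hμt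
  exact extCubic_eq_zero_of_mem_adjSpectrum (lamMin_mem_adjSpectrum ⟨μ, hμ⟩)
    (by linarith) (by linarith) (by linarith)

end Extremal

/-- For large `n`, both extreme adjacency eigenvalues of
`G_ℓ = K_1 ∨ (ℓ K_t ∪ (n−1−ℓt) P_1)` are roots of
`λ³ − (t−1)λ² − (n−1)λ + (t−1)(n−1−ℓt) = 0`. -/
theorem extremal_graph_cubic (t : ℕ) (ht : 2 ≤ t) :
    ∃ N : ℕ, ∀ (ℓ n : ℕ), N ≤ n → ℓ * t ≤ n - 1 →
      (lamMax (GExt t ℓ (n - 1 - ℓ * t)) ^ 3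
          - ((t : ℝ) - 1) * lamMax (GExt t ℓ (n - 1 - ℓ * t)) ^ 2
          - ((n : ℝ) - 1) * lamMax (GExt t ℓ (n - 1 - ℓ * t))
          + ((t : ℝ) - 1) * ((n : ℝ) - 1 - (ℓ : ℝ) * t) = 0) ∧
      (lamMin (GExt t ℓ (n - 1 - ℓ * t)) ^ 3
          - ((t : ℝ) - 1) * lamMin (GExt t ℓ (n - 1 - ℓ * t)) ^ 2
          - ((n : ℝ) - 1) * lamMin (GExt t ℓ (n - 1 - ℓ * t))
          + ((t : ℝ) - 1) * ((n : ℝ) - 1 - (ℓ : ℝ) * t) = 0) := by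
  refine ⟨t ^ 2 + 2, fun ℓ n hn hℓ => ?_⟩
  set m := n - 1 - ℓ * t
  have hsum : ℓ * t + m + 1 = n := by omega
  have hsumR : (ℓ : ℝ) * t + m = n - 1 := by
    rw [← hsum]; push_cast; ring
  have ht1 : 1 ≤ t := by omega
  have hbig : ((t : ℝ) - 1) ^ 2 < ℓ * t + m := by
    have hnR : ((t ^ 2 + 2 : ℕ) : ℝ) ≤ n := by exact_mod_cast hn
    have htR : (1 : ℝ) ≤ t := by exact_mod_cast ht1
    push_cast at hnR
    nlinarith
  have hℓm : 2 ≤ ℓ + m := by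
    by_contra! h
    have hℓt : ℓ * t ≤ 1 * t := Nat.mul_le_mul_right t (by omega)
    have ht2 : 2 * t ≤ t ^ 2 := by nlinarith
    omega
  have hmax := extCubic_lamMax_eq_zero ht1 hbig
  have hmin := extCubic_lamMin_eq_zero ht1 hℓm
  unfold extCubic at hmax hmin
  exact ⟨by linear_combination hmax + (lamMax (GExt t ℓ m) - ((t : ℝ) - 1)) * hsumR,
    by linear_combination hmin + (lamMin (GExt t ℓ m) - ((t : ℝ) - 1)) * hsumR⟩
end
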